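/- arXiv:2001.04138 — 7 statements merged into one kernel-verified Lean document; each statement's English description precedes it below -/
import Mathlib

section
/- Let L be a number field and P ∈ L[Y] a nonzero monic univariate polynomial. If α is a root of P (in an algebraic closure of L), then the absolute logarithmic Weil height of α satisfies h(α) ≤ h(P) + log 2, where h(P) denotes the height of the tuple of coefficients of P. -/
/- Abstract setup for absolute logarithmic Weil heights: a number field `L'` is
equipped with its family of places `v`, given by normalized absolute values
`absv v` with local weights `wt v = d_v / [L':ℚ]`, the archimedean places
forming a finite set `arch` with total weight `1`, the other places being
nonarchimedean. -/

/-- The absolute logarithmic Weil height of an element. -/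
noncomputable def heightElem {L V : Type*} [Field L]
    (absv : V → AbsoluteValue L ℝ) (wt : V → ℝ) (x : L) : ℝ :=
  ∑ᶠ v, wt v * Real.log (max 1 (absv v x))

/-- The height of a univariate polynomial: the height of the affine tuple of
its coefficients. -/
noncomputable def heightPoly {L V : Type*} [Field L]
    (absv : V → AbsoluteValue L ℝ) (wt : V → ℝ) (P : Polynomial L) : ℝ :=
  ∑ᶠ v, wt v * Real.log (max 1 (⨆ k, absv v (P.coeff k)))

/-- Nonarchimedean bound for finite sums. -/
lemma nonarch_finset_sum_le {R : Type*} [Field R] (a : AbsoluteValue R ℝ)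
    (hna : IsNonarchimedean ⇑a) {ι : Type*} (s : Finset ι) (f : ι → R) {B : ℝ}
    (hB : 0 ≤ B) (h : ∀ i ∈ s, a (f i) ≤ B) : a (∑ i ∈ s, f i) ≤ B := by
  induction s using Finset.cons_induction with
  | empty => simpa using hB
  | cons i s hi ih =>
    rw [Finset.sum_cons]
    exact le_trans (hna _ _) (max_le (h i (Finset.mem_cons_self i s))
      (ih fun j hj => h j (Finset.mem_cons.mpr (Or.inr hj))))

lemma root_eq_neg_sum {L' : Type*} [Field L'] {Q : Polynomial L'} (hQ : Q.Monic)
    {α : L'} (hev : Polynomial.eval α Q = 0) :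
    α ^ Q.natDegree = -∑ i ∈ Finset.range Q.natDegree, Q.coeff i * α ^ i := by
  have h := Polynomial.eval_eq_sum_range (p := Q) α
  rw [Finset.sum_range_succ, hQ.coeff_natDegree, one_mul, hev] at h
  linear_combination -h

lemma monic_natDegree_pos {L' : Type*} [Field L'] {Q : Polynomial L'} (hQ : Q.Monic)
    {α : L'} (hev : Polynomial.eval α Q = 0) : 1 ≤ Q.natDegree := by
  by_contra hc
  push_neg at hc
  have h0 : Q.natDegree = 0 := by omega
  have : Q = 1 := hQ.natDegree_eq_zero.mp h0
  rw [this] at hev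
  simp at hev

/-- Archimedean-style bound (only uses the triangle inequality). -/
lemma max_abs_root_le {L' : Type*} [Field L'] (a : AbsoluteValue L' ℝ)
    {Q : Polynomial L'} (hQ : Q.Monic) {α : L'} (hev : Polynomial.eval α Q = 0)
    {S : ℝ} (hS1 : 1 ≤ S) (hS : ∀ k, a (Q.coeff k) ≤ S) :
    max 1 (a α) ≤ 2 * S := by
  rcases le_or_gt (a α) 1 with h | h
  · exact max_le (by linarith) (by linarith)
  refine max_le (by linarith) ?_
  set n := Q.natDegree with hn
  have hn1 : 1 ≤ n := monic_natDegree_pos hQ hev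
  have hid := root_eq_neg_sum hQ hev
  have hxn : (0:ℝ) < a α ^ n := pow_pos (by linarith) n
  have key : a α ^ n ≤ S * ((a α ^ n - 1) / (a α - 1)) := by
    calc a α ^ n = a (α ^ n) := (map_pow a α n).symm
      _ = a (∑ i ∈ Finset.range n, Q.coeff i * α ^ i) := by
          rw [hid, AbsoluteValue.map_neg]
      _ ≤ ∑ i ∈ Finset.range n, a (Q.coeff i * α ^ i) := a.sum_le _ _
      _ = ∑ i ∈ Finset.range n, a (Q.coeff i) * a α ^ i := by
          simp [map_mul, map_pow]
      _ ≤ ∑ i ∈ Finset.range n, S * a α ^ i :=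
          Finset.sum_le_sum fun i _ =>
            mul_le_mul_of_nonneg_right (hS i) (pow_nonneg (a.nonneg _) i)
      _ = S * ∑ i ∈ Finset.range n, a α ^ i := (Finset.mul_sum _ _ _).symm
      _ = S * ((a α ^ n - 1) / (a α - 1)) := by rw [geom_sum_eq (ne_of_gt h)]
  have hd : (0:ℝ) < a α - 1 := by linarith
  rw [mul_div_assoc'] at key
  have h2 : a α ^ n * (a α - 1) ≤ S * (a α ^ n - 1) := (le_div_iff₀ hd).mp key
  have h3 : (a α - 1) * a α ^ n ≤ S * a α ^ n := by nlinarith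
  have h4 : a α - 1 ≤ S := le_of_mul_le_mul_right (by ring_nf; ring_nf at h3; linarith) hxn
  linarith

/-- Nonarchimedean bound. -/
lemma max_abs_root_le_na {L' : Type*} [Field L'] (a : AbsoluteValue L' ℝ)
    (hna : IsNonarchimedean ⇑a)
    {Q : Polynomial L'} (hQ : Q.Monic) {α : L'} (hev : Polynomial.eval α Q = 0)
    {S : ℝ} (hS1 : 1 ≤ S) (hS : ∀ k, a (Q.coeff k) ≤ S) :
    max 1 (a α) ≤ S := by
  rcases le_or_gt (a α) 1 with h | h
  · exact max_le hS1 (h.trans hS1)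
  refine max_le hS1 ?_
  set n := Q.natDegree with hn
  have hn1 : 1 ≤ n := monic_natDegree_pos hQ hev
  have hid := root_eq_neg_sum hQ hev
  have key : a α ^ n ≤ S * a α ^ (n - 1) := by
    calc a α ^ n = a (α ^ n) := (map_pow a α n).symm
      _ = a (∑ i ∈ Finset.range n, Q.coeff i * α ^ i) := by
          rw [hid, AbsoluteValue.map_neg]
      _ ≤ S * a α ^ (n - 1) := by
          refine nonarch_finset_sum_le a hna _ _
            (mul_nonneg (by linarith) (pow_nonneg (a.nonneg _) _)) ?_
          intro i hi
          rw [map_mul, map_pow]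
          exact mul_le_mul (hS i)
            (pow_le_pow_right₀ h.le (by
              have := Finset.mem_range.mp hi; omega))
            (pow_nonneg (a.nonneg _) i) (by linarith)
  have hxn : (0:ℝ) < a α ^ (n - 1) := pow_pos (by linarith) _
  have hpow : a α ^ n = a α ^ (n - 1) * a α := by
    rw [← pow_succ]
    congr 1
    omega
  rw [hpow, mul_comm S] at key
  exact le_of_mul_le_mul_left (by rw [mul_comm (a α ^ (n-1))] at key ⊢; exact key) hxn

/-- If `P` is a nonzero monic univariate polynomial over a number field `L`
and `α` is a root of `P` (in an algebraic closure of `L`, hence in some finite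
extension `L'` of `L`), then `h(α) ≤ h(P) + log 2`. -/
theorem height_root_le_height_poly_add_log_two
    {L L' V : Type*} [Field L] [Field L'] [Algebra L L']
    (absv : V → AbsoluteValue L' ℝ) (wt : V → ℝ) (arch : Set V)
    (harch : arch.Finite) (hwt : ∀ v, 0 ≤ wt v)
    (hna : ∀ v ∉ arch, IsNonarchimedean ⇑(absv v))
    (hsum : ∑ᶠ v ∈ arch, wt v = 1)
    (hfin : ∀ x : L', x ≠ 0 → {v | absv v x ≠ 1}.Finite)
    (P : Polynomial L) (hP0 : P ≠ 0) (hP : P.Monic)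
    (α : L') (hα : Polynomial.aeval α P = 0) :
    heightElem absv wt α ≤
      heightPoly absv wt (P.map (algebraMap L L')) + Real.log 2 := by
  classical
  set Q : Polynomial L' := P.map (algebraMap L L') with hQdef
  have hQ : Q.Monic := hP.map _
  have hev : Polynomial.eval α Q = 0 := by
    rw [hQdef, Polynomial.eval_map, ← Polynomial.aeval_def, hα]
  -- the sup of the coefficients at a place v
  set S : V → ℝ := fun v => ⨆ k, absv v (Q.coeff k) with hSdef
  have hbdd : ∀ v, BddAbove (Set.range fun k => absv v (Q.coeff k)) := by
    intro v
    apply Set.Finite.bddAbove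
    have hsub : (Set.range fun k => absv v (Q.coeff k)) ⊆
        (fun k => absv v (Q.coeff k)) '' (Set.Iic (Q.natDegree + 1)) := by
      rintro x ⟨k, rfl⟩
      rcases le_or_gt k (Q.natDegree + 1) with hk | hk
      · exact ⟨k, hk, rfl⟩
      · refine ⟨Q.natDegree + 1, Set.mem_Iic.mpr le_rfl, ?_⟩
        show (absv v) (Q.coeff (Q.natDegree + 1)) = (absv v) (Q.coeff k)
        rw [Polynomial.coeff_eq_zero_of_natDegree_lt (show Q.natDegree < Q.natDegree + 1 by omega),
          Polynomial.coeff_eq_zero_of_natDegree_lt (show Q.natDegree < k by omega)]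
    exact Set.Finite.subset ((Set.finite_Iic _).image _) hsub
  have hSk : ∀ v k, absv v (Q.coeff k) ≤ S v := fun v k => le_ciSup (hbdd v) k
  have hS1 : ∀ v, 1 ≤ S v := by
    intro v
    have := hSk v Q.natDegree
    rwa [hQ.coeff_natDegree, map_one] at this
  -- the summands
  set F : V → ℝ := fun v => wt v * Real.log (max 1 (absv v α)) with hFdef
  set G : V → ℝ := fun v => wt v * Real.log (max 1 (S v)) with hGdef
  -- finiteness of supports
  have hFsupp : (Function.support F).Finite := by
    by_cases hα0 : α = 0
    · have : Function.support F = ∅ := by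
        ext v
        simp [hFdef, hα0, Function.mem_support]
      rw [this]; exact Set.finite_empty
    · refine Set.Finite.subset (hfin α hα0) ?_
      intro v hv
      simp only [Function.mem_support, hFdef] at hv
      intro h1
      apply hv
      rw [h1]
      simp
  have hGsupp : (Function.support G).Finite := by
    refine Set.Finite.subset
      (Set.Finite.biUnion Q.support.finite_toSet
        (fun k hk => hfin _ (Polynomial.mem_support_iff.mp hk))) ?_
    intro v hv
    simp only [Function.mem_support, hGdef] at hv
    have hSne : S v ≠ 1 := by
      intro h1
      apply hv
      rw [h1]
      simp
    have hSgt : 1 < S v := lt_of_le_of_ne (hS1 v) (Ne.symm hSne)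
    obtain ⟨k, hk⟩ := (lt_ciSup_iff (hbdd v)).mp hSgt
    have hk0 : Q.coeff k ≠ 0 := by
      intro h0
      rw [h0, map_zero] at hk
      linarith
    exact Set.mem_biUnion (Polynomial.mem_support_iff.mpr hk0) (by
      simp only [Set.mem_setOf_eq]
      exact ne_of_gt hk)
  -- the common finite index set
  set T : Finset V := hFsupp.toFinset ∪ hGsupp.toFinset ∪ harch.toFinset with hTdef
  have hFT : Function.support F ⊆ ↑T := by
    intro v hv
    simp only [hTdef, Finset.coe_union, Set.Finite.coe_toFinset]
    exact Or.inl (Or.inl hv)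
  have hGT : Function.support G ⊆ ↑T := by
    intro v hv
    simp only [hTdef, Finset.coe_union, Set.Finite.coe_toFinset]
    exact Or.inl (Or.inr hv)
  have harchT : harch.toFinset ⊆ T := by
    intro v hv
    simp only [hTdef, Finset.mem_union]
    exact Or.inr hv
  have hE : heightElem absv wt α = ∑ v ∈ T, F v :=
    finsum_eq_finset_sum_of_support_subset F hFT
  have hPq : heightPoly absv wt Q = ∑ v ∈ T, G v :=
    finsum_eq_finset_sum_of_support_subset G hGT
  have hwsum : ∑ v ∈ harch.toFinset, wt v = 1 := by
    have h1 := finsum_mem_coe_finset wt harch.toFinset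
    rw [harch.coe_toFinset, hsum] at h1
    exact h1.symm
  -- pointwise inequality
  have hpoint : ∀ v, F v ≤ G v + (if v ∈ arch then wt v * Real.log 2 else 0) := by
    intro v
    have hmaxS : max 1 (S v) = S v := max_eq_right (hS1 v)
    by_cases hv : v ∈ arch
    · rw [if_pos hv]
      have hb : max 1 (absv v α) ≤ 2 * S v :=
        max_abs_root_le (absv v) hQ hev (hS1 v) (hSk v)
      have hlog : Real.log (max 1 (absv v α)) ≤ Real.log 2 + Real.log (S v) := by
        calc Real.log (max 1 (absv v α)) ≤ Real.log (2 * S v) :=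
              Real.log_le_log (lt_of_lt_of_le one_pos (le_max_left _ _)) hb
          _ = Real.log 2 + Real.log (S v) :=
              Real.log_mul two_ne_zero (by linarith [hS1 v])
      simp only [hFdef, hGdef, hmaxS]
      calc wt v * Real.log (max 1 (absv v α))
          ≤ wt v * (Real.log 2 + Real.log (S v)) :=
            mul_le_mul_of_nonneg_left hlog (hwt v)
        _ = wt v * Real.log (S v) + wt v * Real.log 2 := by ring
    · rw [if_neg hv, add_zero]
      have hb : max 1 (absv v α) ≤ S v :=
        max_abs_root_le_na (absv v) (hna v hv) hQ hev (hS1 v) (hSk v)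
      simp only [hFdef, hGdef, hmaxS]
      exact mul_le_mul_of_nonneg_left
        (Real.log_le_log (lt_of_lt_of_le one_pos (le_max_left _ _)) hb) (hwt v)
  -- put everything together
  have harchsum : ∑ v ∈ T, (if v ∈ arch then wt v * Real.log 2 else 0)
      = Real.log 2 := by
    rw [← Finset.sum_filter]
    have hfil : T.filter (fun v => v ∈ arch) = harch.toFinset := by
      ext v
      simp only [Finset.mem_filter, Set.Finite.mem_toFinset]
      constructor
      · rintro ⟨_, h⟩; exact h
      · intro h; exact ⟨harchT (harch.mem_toFinset.mpr h), h⟩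
    rw [hfil, ← Finset.sum_mul, hwsum, one_mul]
  calc heightElem absv wt α = ∑ v ∈ T, F v := hE
    _ ≤ ∑ v ∈ T, (G v + (if v ∈ arch then wt v * Real.log 2 else 0)) :=
        Finset.sum_le_sum fun v _ => hpoint v
    _ = ∑ v ∈ T, G v + ∑ v ∈ T, (if v ∈ arch then wt v * Real.log 2 else 0) :=
        Finset.sum_add_distrib
    _ = heightPoly absv wt Q + Real.log 2 := by rw [← hPq, harchsum]
end

section
/- Let L be a number field, P ∈ L[Y_1,…,Y_n] a polynomial of total degree at most d, let 1 ≤ m ≤ n, and let y_1,…,y_m ∈ L. Set Q = P(y_1,…,y_m,Y_{m+1},…,Y_n). Then h(Q) ≤ h(P) + m·log(d+1) + d·h(y_1,…,y_m), where h(y_1,…,y_m) is the affine height of the tuple. -/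
/- Abstract setup for absolute logarithmic Weil heights on a number field `L`:
places `v` with normalized absolute values `absv v` and local weights
`wt v = d_v / [L:ℚ]`, the archimedean places forming a finite set `arch` of
total weight `1`, the other places being nonarchimedean. -/

/-- The affine height of a tuple of elements. -/
noncomputable def heightTuple {L V : Type*} [Field L]
    (absv : V → AbsoluteValue L ℝ) (wt : V → ℝ) {ι : Type*} (y : ι → L) : ℝ :=
  ∑ᶠ v, wt v * Real.log (max 1 (⨆ i, absv v (y i)))

/-- The height of a multivariate polynomial: the height of the affine tuple of
its coefficients. -/
noncomputable def heightMv {L V : Type*} [Field L] {σ : Type*}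
    (absv : V → AbsoluteValue L ℝ) (wt : V → ℝ) (P : MvPolynomial σ L) : ℝ :=
  ∑ᶠ v, wt v * Real.log (max 1 (⨆ s ∈ P.support, absv v (MvPolynomial.coeff s P)))

/-- Partial evaluation `P(y_1,…,y_m,Y_{m+1},…,Y_n)` of a multivariate
polynomial at values for its first `m` variables. -/
noncomputable def partialEval {L : Type*} [CommSemiring L] {n m : ℕ}
    (y : Fin m → L) (P : MvPolynomial (Fin n) L) : MvPolynomial (Fin n) L :=
  MvPolynomial.aeval
    (fun i : Fin n => if h : (i : ℕ) < m then MvPolynomial.C (y ⟨i, h⟩)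
      else MvPolynomial.X i) P


section Aux
open Finset MvPolynomial

theorem le_max_biSup {ι : Type*} (A : Finset ι) (f : ι → ℝ) {i} (hi : i ∈ A) :
    f i ≤ max 1 (⨆ j ∈ A, f j) := by
  classical
  have hfun : (fun j => ⨆ _ : j ∈ A, f j) = fun j => if j ∈ A then f j else 0 := by
    funext j; by_cases h : j ∈ A
    · simp [h, ciSup_pos]
    · simp [h, Real.iSup_of_isEmpty]
  have hbdd : BddAbove (Set.range fun j => ⨆ _ : j ∈ A, f j) := by
    rw [hfun]
    apply Set.Finite.bddAbove
    apply Set.Finite.subset (Set.Finite.insert 0 (A.finite_toSet.image f))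
    rintro x ⟨j, rfl⟩
    by_cases h : j ∈ A <;> simp only [h, if_true, if_false]
    · exact Or.inr ⟨j, h, rfl⟩
    · exact Or.inl rfl
  refine le_trans ?_ (le_max_right _ _)
  refine le_trans ?_ (le_ciSup hbdd i)
  simp [ciSup_pos hi]

theorem max_biSup_le {ι : Type*} (A : Finset ι) (f : ι → ℝ) {B : ℝ} (h1 : 1 ≤ B)
    (hle : ∀ i ∈ A, f i ≤ B) : max 1 (⨆ j ∈ A, f j) ≤ B :=
  max_le h1 (Real.iSup_le (fun j => Real.iSup_le (fun hj => hle j hj) (by linarith)) (by linarith))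

theorem max_biSup_eq_one {ι : Type*} (A : Finset ι) (f : ι → ℝ)
    (hle : ∀ i ∈ A, f i ≤ 1) : max 1 (⨆ j ∈ A, f j) = 1 :=
  le_antisymm (max_biSup_le A f le_rfl hle) (le_max_left _ _)

theorem le_max_iSup_fin {m : ℕ} (g : Fin m → ℝ) (i : Fin m) :
    g i ≤ max 1 (⨆ j, g j) :=
  le_trans (le_ciSup (Set.finite_range g).bddAbove i) (le_max_right _ _)

theorem max_iSup_fin_le {m : ℕ} (g : Fin m → ℝ) {B : ℝ} (h1 : 1 ≤ B)
    (hle : ∀ i, g i ≤ B) : max 1 (⨆ j, g j) ≤ B :=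
  max_le h1 (Real.iSup_le hle (by linarith))

theorem nonarch_sum_le {L : Type*} [Field L] {abv : AbsoluteValue L ℝ}
    (hna : IsNonarchimedean ⇑abv) {ι : Type*} (A : Finset ι) (f : ι → L) {B : ℝ}
    (hB : 0 ≤ B) (h : ∀ i ∈ A, abv (f i) ≤ B) : abv (∑ i ∈ A, f i) ≤ B := by
  classical
  induction A using Finset.induction_on with
  | empty => simpa using hB
  | @insert a A' hx ih =>
    rw [Finset.sum_insert hx]
    refine le_trans (hna _ _) (max_le (h a (mem_insert_self _ _))
      (ih fun i hi => h i (mem_insert_of_mem hi)))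


theorem partialEval_eq {L : Type*} [CommSemiring L] {n m : ℕ} (hmn : m ≤ n)
    (y : Fin m → L) (P : MvPolynomial (Fin n) L) :
    partialEval y P = ∑ s ∈ P.support,
      monomial (Finsupp.filter (fun i : Fin n => ¬ (i : ℕ) < m) s)
        (MvPolynomial.coeff s P * ∏ i : Fin m, y i ^ s (Fin.castLE hmn i)) := by
  classical
  set φ : Fin n → MvPolynomial (Fin n) L :=
    fun i => if h : (i : ℕ) < m then MvPolynomial.C (y ⟨i, h⟩) else MvPolynomial.X i with hφ
  conv_lhs => rw [partialEval, P.as_sum, map_sum]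
  refine Finset.sum_congr rfl fun s _ => ?_
  rw [aeval_monomial]
  have hprod : (s.prod fun i k => φ i ^ k) = ∏ i ∈ s.support, φ i ^ s i := rfl
  rw [hprod]
  rw [← Finset.prod_filter_mul_prod_filter_not s.support (fun i : Fin n => (i : ℕ) < m)]
  set F : Fin n → MvPolynomial (Fin n) L :=
    fun i => if h : (i : ℕ) < m then MvPolynomial.C (y ⟨i, h⟩) else 1 with hF
  have hA : ∏ i ∈ s.support.filter (fun i : Fin n => (i : ℕ) < m), φ i ^ s i
      = MvPolynomial.C (∏ i : Fin m, y i ^ s (Fin.castLE hmn i)) := by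
    have h1 : ∏ i ∈ s.support.filter (fun i : Fin n => (i : ℕ) < m), φ i ^ s i
        = ∏ i ∈ s.support.filter (fun i : Fin n => (i : ℕ) < m), (F i ^ s i) := by
      refine Finset.prod_congr rfl fun i hi => ?_
      have h := (Finset.mem_filter.mp hi).2
      rw [hφ, hF]; simp only [h, dif_pos]
    rw [h1]
    have h2 : ∏ i ∈ s.support.filter (fun i : Fin n => (i : ℕ) < m), (F i ^ s i)
        = ∏ i : Fin n, (F i ^ s i) := by
      refine Finset.prod_subset (Finset.subset_univ _) fun i _ hi => ?_
      by_cases h : (i : ℕ) < m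
      · have : s i = 0 := by
          by_contra hs
          exact hi (Finset.mem_filter.mpr ⟨Finsupp.mem_support_iff.mpr hs, h⟩)
        simp [this]
      · simp [hF, h]
    rw [h2]
    have h3 : ∏ i : Fin n, F i ^ s i
        = ∏ i : Fin m, (MvPolynomial.C (y i)) ^ s (Fin.castLE hmn i) := by
      have e1 : ∏ i : Fin n, F i ^ s i
          = ∏ i ∈ Finset.univ.map (Fin.castLEEmb hmn), F i ^ s i := by
        refine (Finset.prod_subset (Finset.subset_univ _) fun i _ hi => ?_).symm
        have h : ¬ (i : ℕ) < m := by
          intro h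
          exact hi (Finset.mem_map.mpr ⟨⟨(i : ℕ), h⟩, Finset.mem_univ _, by
            simp [Fin.castLEEmb, Fin.castLE, Fin.ext_iff]⟩)
        simp [hF, h]
      rw [e1, Finset.prod_map]
      refine Finset.prod_congr rfl fun i _ => ?_
      have h : ((Fin.castLEEmb hmn i : Fin n) : ℕ) < m := by
        simp [Fin.castLEEmb]
      simp only [hF, Fin.castLEEmb, Function.Embedding.coeFn_mk] at h ⊢
      rw [dif_pos h]
      congr 1
    rw [h3, map_prod]
    refine Finset.prod_congr rfl fun i _ => by rw [map_pow]
  have hB : ∏ i ∈ s.support.filter (fun i : Fin n => ¬ (i : ℕ) < m), φ i ^ s i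
      = monomial (Finsupp.filter (fun i : Fin n => ¬ (i : ℕ) < m) s) (1 : L) := by
    rw [monomial_eq, map_one, one_mul]
    rw [Finsupp.prod, Finsupp.support_filter]
    refine (Finset.prod_congr rfl fun i hi => ?_).symm
    have h := (Finset.mem_filter.mp hi).2
    rw [Finsupp.filter_apply, if_pos h, hφ]
    simp only [h, dif_neg, not_false_iff]
  rw [hA, hB, algebraMap_eq, ← mul_assoc, ← map_mul, C_mul_monomial, mul_one]

theorem fiber_card_le {L : Type*} [Field L] {n m d : ℕ} (hmn : m ≤ n)
    (P : MvPolynomial (Fin n) L) (hd : P.totalDegree ≤ d) (t : Fin n →₀ ℕ) :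
    (P.support.filter (fun s => Finsupp.filter (fun i : Fin n => ¬ (i : ℕ) < m) s = t)).card
      ≤ (d + 1) ^ m := by
  classical
  have key : ∀ s ∈ P.support, ∀ i : Fin n, s i ≤ d := by
    intro s hs i
    refine le_trans ?_ (le_trans (MvPolynomial.le_totalDegree hs) hd)
    by_cases h : i ∈ s.support
    · exact Finset.single_le_sum (fun _ _ => Nat.zero_le _) h
    · simp [Finsupp.notMem_support_iff.mp h]
  have := Finset.card_le_card_of_injOn
    (s := P.support.filter (fun s => Finsupp.filter (fun i : Fin n => ¬ (i : ℕ) < m) s = t))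
    (f := fun s : (Fin n →₀ ℕ) => fun i : Fin m =>
      (⟨min (s (Fin.castLE hmn i)) d, Nat.lt_succ_of_le (min_le_right _ _)⟩ : Fin (d+1)))
    (t := (Finset.univ : Finset (Fin m → Fin (d+1))))
    (fun _ _ => Finset.mem_univ _) ?_
  · simpa [Finset.card_univ] using this
  · intro s hs s' hs' he
    simp only [Finset.mem_coe, Finset.mem_filter] at hs hs'
    ext i
    by_cases h : (i : ℕ) < m
    · have h1 := congrFun he ⟨i, h⟩
      have hcast : Fin.castLE hmn (⟨(i:ℕ), h⟩ : Fin m) = i := by simp [Fin.ext_iff]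
      rw [Fin.mk.injEq, hcast, min_eq_left (key s hs.1 i), min_eq_left (key s' hs'.1 i)] at h1
      exact h1
    · have h1 : Finsupp.filter (fun i : Fin n => ¬ (i : ℕ) < m) s i
          = Finsupp.filter (fun i : Fin n => ¬ (i : ℕ) < m) s' i := by rw [hs.2, hs'.2]
      rw [Finsupp.filter_apply, Finsupp.filter_apply, if_pos h, if_pos h] at h1
      exact h1

theorem term_bound {L : Type*} [Field L] (abv : AbsoluteValue L ℝ) {n m d : ℕ}
    (hmn : m ≤ n) (P : MvPolynomial (Fin n) L) (hd : P.totalDegree ≤ d)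
    (y : Fin m → L) {MP MY : ℝ} (hMY1 : 1 ≤ MY)
    (hMP : ∀ s ∈ P.support, abv (MvPolynomial.coeff s P) ≤ MP) (hMY : ∀ i, abv (y i) ≤ MY)
    {s : Fin n →₀ ℕ} (hs : s ∈ P.support) :
    abv (MvPolynomial.coeff s P * ∏ i : Fin m, y i ^ s (Fin.castLE hmn i)) ≤ MP * MY ^ d := by
  have h0MY : 0 ≤ MY := le_trans zero_le_one hMY1
  rw [map_mul]
  have habs : abv (∏ i : Fin m, y i ^ s (Fin.castLE hmn i)) ≤ MY ^ d := by
    rw [map_prod]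
    have h1 : ∀ i : Fin m, abv (y i ^ s (Fin.castLE hmn i)) ≤ MY ^ s (Fin.castLE hmn i) :=
      fun i => by rw [map_pow]; exact pow_le_pow_left₀ (abv.nonneg _) (hMY i) _
    refine le_trans (Finset.prod_le_prod (fun i _ => abv.nonneg _) (fun i _ => h1 i)) ?_
    rw [Finset.prod_pow_eq_pow_sum]
    refine pow_le_pow_right₀ hMY1 ?_
    have h2 : ∑ i : Fin m, s (Fin.castLE hmn i)
        = ∑ j ∈ Finset.univ.map (Fin.castLEEmb hmn), s j := by
      rw [Finset.sum_map]; rfl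
    rw [h2]
    refine le_trans (Finset.sum_le_sum_of_subset (Finset.subset_univ _)) ?_
    have h3 : ∑ j : Fin n, s j = s.sum fun _ e => e := by
      rw [Finsupp.sum]
      exact (Finset.sum_subset (Finset.subset_univ _)
        (fun j _ hj => Finsupp.notMem_support_iff.mp hj)).symm
    rw [h3]
    exact le_trans (MvPolynomial.le_totalDegree hs) hd
  calc abv _ * abv _ ≤ MP * MY ^ d :=
    mul_le_mul (hMP s hs) habs (abv.nonneg _) (le_trans (abv.nonneg _) (hMP s hs))

theorem local_bound_arch {L : Type*} [Field L] (abv : AbsoluteValue L ℝ) {n m d : ℕ}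
    (hmn : m ≤ n) (P : MvPolynomial (Fin n) L) (hd : P.totalDegree ≤ d)
    (y : Fin m → L) {MP MY : ℝ} (hMP0 : 0 ≤ MP) (hMY1 : 1 ≤ MY)
    (hMP : ∀ s ∈ P.support, abv (MvPolynomial.coeff s P) ≤ MP) (hMY : ∀ i, abv (y i) ≤ MY)
    (t : Fin n →₀ ℕ) :
    abv (MvPolynomial.coeff t (partialEval y P)) ≤ ((d : ℝ) + 1) ^ m * (MP * MY ^ d) := by
  classical
  have hB : (0:ℝ) ≤ MP * MY ^ d := mul_nonneg hMP0 (pow_nonneg (by linarith) _)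
  rw [partialEval_eq hmn, MvPolynomial.coeff_sum]
  simp_rw [MvPolynomial.coeff_monomial]
  refine le_trans (abv.sum_le _ _) ?_
  have h1 : ∀ s ∈ P.support,
      abv (if Finsupp.filter (fun i : Fin n => ¬ (i : ℕ) < m) s = t
        then MvPolynomial.coeff s P * ∏ i : Fin m, y i ^ s (Fin.castLE hmn i) else 0)
      ≤ (if Finsupp.filter (fun i : Fin n => ¬ (i : ℕ) < m) s = t then MP * MY ^ d else 0) := by
    intro s hs
    split
    · exact term_bound abv hmn P hd y hMY1 hMP hMY hs
    · simp
  refine le_trans (Finset.sum_le_sum h1) ?_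
  rw [← Finset.sum_filter, Finset.sum_const, nsmul_eq_mul]
  refine mul_le_mul_of_nonneg_right ?_ hB
  exact_mod_cast fiber_card_le hmn P hd t

theorem local_bound_nonarch {L : Type*} [Field L] {abv : AbsoluteValue L ℝ}
    (hna : IsNonarchimedean ⇑abv) {n m d : ℕ}
    (hmn : m ≤ n) (P : MvPolynomial (Fin n) L) (hd : P.totalDegree ≤ d)
    (y : Fin m → L) {MP MY : ℝ} (hMP0 : 0 ≤ MP) (hMY1 : 1 ≤ MY)
    (hMP : ∀ s ∈ P.support, abv (MvPolynomial.coeff s P) ≤ MP) (hMY : ∀ i, abv (y i) ≤ MY)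
    (t : Fin n →₀ ℕ) :
    abv (MvPolynomial.coeff t (partialEval y P)) ≤ MP * MY ^ d := by
  classical
  have hB : (0:ℝ) ≤ MP * MY ^ d := mul_nonneg hMP0 (pow_nonneg (by linarith) _)
  rw [partialEval_eq hmn, MvPolynomial.coeff_sum]
  simp_rw [MvPolynomial.coeff_monomial]
  refine nonarch_sum_le hna _ _ hB ?_
  intro s hs
  split
  · exact term_bound abv hmn P hd y hMY1 hMP hMY hs
  · simpa using hB


end Aux

/-- Evaluating the first `m` variables of a polynomial of total degree at most
`d` over a number field increases the height by at most
`m·log(d+1) + d·h(y_1,…,y_m)`. -/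

theorem height_partialEval_le
    {L V : Type*} [Field L]
    (absv : V → AbsoluteValue L ℝ) (wt : V → ℝ) (arch : Set V)
    (harch : arch.Finite) (hwt : ∀ v, 0 ≤ wt v)
    (hna : ∀ v ∉ arch, IsNonarchimedean ⇑(absv v))
    (hsum : ∑ᶠ v ∈ arch, wt v = 1)
    (hfin : ∀ x : L, x ≠ 0 → {v | absv v x ≠ 1}.Finite)
    {n : ℕ} (P : MvPolynomial (Fin n) L) (d : ℕ) (hd : P.totalDegree ≤ d)
    (m : ℕ) (hm1 : 1 ≤ m) (hmn : m ≤ n) (y : Fin m → L) :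
    heightMv absv wt (partialEval y P) ≤
      heightMv absv wt P + m * Real.log (d + 1)
        + d * heightTuple absv wt y := by
  classical
  set Q := partialEval y P with hQdef
  set MP : V → ℝ := fun v => max 1 (⨆ s ∈ P.support, absv v (MvPolynomial.coeff s P)) with hMPdef
  set MQ : V → ℝ := fun v => max 1 (⨆ s ∈ Q.support, absv v (MvPolynomial.coeff s Q)) with hMQdef
  set MY : V → ℝ := fun v => max 1 (⨆ i, absv v (y i)) with hMYdef
  have hMP1 : ∀ v, 1 ≤ MP v := fun v => le_max_left _ _
  have hMQ1 : ∀ v, 1 ≤ MQ v := fun v => le_max_left _ _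
  have hMY1 : ∀ v, 1 ≤ MY v := fun v => le_max_left _ _
  have hdc : (0:ℝ) ≤ (d:ℝ) := Nat.cast_nonneg d
  have hd1m : (1:ℝ) ≤ ((d:ℝ) + 1) ^ m :=
    one_le_pow₀ (by linarith)
  -- the key local logarithmic inequality
  have key : ∀ v, Real.log (MQ v) ≤
      (if v ∈ arch then (m : ℝ) * Real.log ((d:ℝ) + 1) else 0)
        + Real.log (MP v) + (d : ℝ) * Real.log (MY v) := by
    intro v
    have hcP : ∀ s ∈ P.support, absv v (MvPolynomial.coeff s P) ≤ MP v :=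
      fun s hs => le_max_biSup P.support (fun s => absv v (MvPolynomial.coeff s P)) hs
    have hcY : ∀ i, absv v (y i) ≤ MY v := fun i => le_max_iSup_fin (fun j => absv v (y j)) i
    have hMP0 : (0:ℝ) ≤ MP v := by linarith [hMP1 v]
    have hprod1 : (1:ℝ) ≤ MP v * MY v ^ d :=
      le_trans (hMP1 v) (le_mul_of_one_le_right hMP0 (one_le_pow₀ (hMY1 v)))
    by_cases hv : v ∈ arch
    · have hb : MQ v ≤ ((d:ℝ) + 1) ^ m * (MP v * MY v ^ d) := by
        refine max_biSup_le _ _ ?_ fun t ht =>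
          local_bound_arch (absv v) hmn P hd y hMP0 (hMY1 v) hcP hcY t
        calc (1:ℝ) = 1 * 1 := (one_mul 1).symm
        _ ≤ ((d:ℝ) + 1) ^ m * (MP v * MY v ^ d) :=
          mul_le_mul hd1m hprod1 zero_le_one (by linarith)
      have hlog := Real.log_le_log (by linarith [hMQ1 v]) hb
      rw [if_pos hv]
      refine le_trans hlog ?_
      rw [Real.log_mul (by positivity) (by positivity),
        Real.log_mul (by positivity) (by positivity), Real.log_pow, Real.log_pow]
      ring_nf
      exact le_refl _
    · have hb : MQ v ≤ MP v * MY v ^ d := by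
        refine max_biSup_le _ _ hprod1 fun t ht =>
          local_bound_nonarch (hna v hv) hmn P hd y hMP0 (hMY1 v) hcP hcY t
      have hlog := Real.log_le_log (by linarith [hMQ1 v]) hb
      rw [if_neg hv, zero_add]
      refine le_trans hlog ?_
      rw [Real.log_mul (by positivity) (by positivity), Real.log_pow]
  -- finiteness of supports
  have hSP : (⋃ s ∈ (P.support : Set (Fin n →₀ ℕ)), {v | absv v (MvPolynomial.coeff s P) ≠ 1}).Finite :=
    Set.Finite.biUnion P.support.finite_toSet
      (fun s hs => hfin _ (MvPolynomial.mem_support_iff.mp hs))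
  have hSQ : (⋃ s ∈ (Q.support : Set (Fin n →₀ ℕ)), {v | absv v (MvPolynomial.coeff s Q) ≠ 1}).Finite :=
    Set.Finite.biUnion Q.support.finite_toSet
      (fun s hs => hfin _ (MvPolynomial.mem_support_iff.mp hs))
  have hSY : (⋃ i ∈ {i : Fin m | y i ≠ 0}, {v | absv v (y i) ≠ 1}).Finite :=
    Set.Finite.biUnion (Set.toFinite _) (fun i hi => hfin _ hi)
  set S : Set V := arch ∪ (⋃ s ∈ (P.support : Set (Fin n →₀ ℕ)), {v | absv v (MvPolynomial.coeff s P) ≠ 1})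
    ∪ (⋃ s ∈ (Q.support : Set (Fin n →₀ ℕ)), {v | absv v (MvPolynomial.coeff s Q) ≠ 1})
    ∪ (⋃ i ∈ {i : Fin m | y i ≠ 0}, {v | absv v (y i) ≠ 1}) with hSdef
  have hS : S.Finite := ((harch.union hSP).union hSQ).union hSY
  set T : Finset V := hS.toFinset with hTdef
  have hTS : (S : Set V) = ↑T := (hS.coe_toFinset).symm
  have harchT : arch ⊆ ↑T := by
    rw [← hTS]; intro v hv; exact Or.inl (Or.inl (Or.inl hv))
  -- supports of the summands
  have hsupP : Function.support (fun v => wt v * Real.log (MP v)) ⊆ ↑T := by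
    rw [← hTS]
    intro v hv
    by_contra hvS
    apply hv
    have h1 : ∀ s ∈ P.support, absv v (MvPolynomial.coeff s P) ≤ 1 := by
      intro s hs
      have : v ∉ (⋃ s ∈ (P.support : Set (Fin n →₀ ℕ)), {v | absv v (MvPolynomial.coeff s P) ≠ 1}) :=
        fun h => hvS (Or.inl (Or.inl (Or.inr h)))
      simp only [Set.mem_iUnion, not_exists, Set.mem_setOf_eq] at this
      have := this s (Finset.mem_coe.mpr hs)
      simp only [not_not] at this
      exact le_of_eq this
    rw [hMPdef]
    simp only
    rw [max_biSup_eq_one _ _ h1, Real.log_one, mul_zero]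
  have hsupQ : Function.support (fun v => wt v * Real.log (MQ v)) ⊆ ↑T := by
    rw [← hTS]
    intro v hv
    by_contra hvS
    apply hv
    have h1 : ∀ s ∈ Q.support, absv v (MvPolynomial.coeff s Q) ≤ 1 := by
      intro s hs
      have : v ∉ (⋃ s ∈ (Q.support : Set (Fin n →₀ ℕ)), {v | absv v (MvPolynomial.coeff s Q) ≠ 1}) :=
        fun h => hvS (Or.inl (Or.inr h))
      simp only [Set.mem_iUnion, not_exists, Set.mem_setOf_eq] at this
      have := this s (Finset.mem_coe.mpr hs)
      simp only [not_not] at this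
      exact le_of_eq this
    rw [hMQdef]
    simp only
    rw [max_biSup_eq_one _ _ h1, Real.log_one, mul_zero]
  have hsupY : Function.support (fun v => wt v * Real.log (MY v)) ⊆ ↑T := by
    rw [← hTS]
    intro v hv
    by_contra hvS
    apply hv
    have h1 : ∀ i : Fin m, absv v (y i) ≤ 1 := by
      intro i
      by_cases hy : y i = 0
      · rw [hy, map_zero]; exact zero_le_one
      · have : v ∉ (⋃ i ∈ {i : Fin m | y i ≠ 0}, {v | absv v (y i) ≠ 1}) :=
          fun h => hvS (Or.inr h)
        simp only [Set.mem_iUnion, not_exists, Set.mem_setOf_eq] at this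
        have := this i hy
        simp only [not_not] at this
        exact le_of_eq this
    rw [hMYdef]
    simp only
    rw [le_antisymm (max_iSup_fin_le _ le_rfl h1) (le_max_left _ _), Real.log_one, mul_zero]
  -- convert the finsums to finite sums over T
  have eQ : heightMv absv wt Q = ∑ v ∈ T, wt v * Real.log (MQ v) :=
    finsum_eq_sum_of_support_subset _ hsupQ
  have eP : heightMv absv wt P = ∑ v ∈ T, wt v * Real.log (MP v) :=
    finsum_eq_sum_of_support_subset _ hsupP
  have eY : heightTuple absv wt y = ∑ v ∈ T, wt v * Real.log (MY v) :=
    finsum_eq_sum_of_support_subset _ hsupY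
  have eA : ∑ v ∈ T, (if v ∈ arch then wt v else 0) = 1 := by
    rw [← Finset.sum_filter]
    rw [← hsum, finsum_mem_eq_finite_toFinset_sum _ harch]
    refine (Finset.sum_congr ?_ (fun _ _ => rfl))
    ext v
    simp only [Finset.mem_filter, Set.Finite.mem_toFinset]
    exact ⟨fun h => h.2, fun h => ⟨harchT h, h⟩⟩
  rw [eQ, eP, eY]
  have step : ∑ v ∈ T, wt v * Real.log (MQ v) ≤
      ∑ v ∈ T, ((if v ∈ arch then wt v else 0) * ((m:ℝ) * Real.log ((d:ℝ)+1))
        + wt v * Real.log (MP v) + (d:ℝ) * (wt v * Real.log (MY v))) := by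
    refine Finset.sum_le_sum fun v _ => ?_
    have hk := key v
    have := mul_le_mul_of_nonneg_left hk (hwt v)
    calc wt v * Real.log (MQ v) ≤ wt v *
        ((if v ∈ arch then (m : ℝ) * Real.log ((d:ℝ) + 1) else 0)
          + Real.log (MP v) + (d : ℝ) * Real.log (MY v)) := this
    _ = (if v ∈ arch then wt v else 0) * ((m:ℝ) * Real.log ((d:ℝ)+1))
        + wt v * Real.log (MP v) + (d:ℝ) * (wt v * Real.log (MY v)) := by
        by_cases hv : v ∈ arch <;> simp [hv] <;> ring
  refine le_trans step ?_
  rw [Finset.sum_add_distrib, Finset.sum_add_distrib, ← Finset.sum_mul, ← Finset.mul_sum, eA, one_mul]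
  push_cast
  linarith
end

section
/- Let L be a number field, P ∈ L[Y_1,…,Y_n] of total degree ≤ d, and let I_1 ⊔ … ⊔ I_r be a partition of {1,…,m} for some m ≤ n. Suppose d_k bounds the total degree of P in the variables (Y_i)_{i ∈ I_k}. Then for y_1,…,y_m ∈ L, the partial evaluation Q = P(y_1,…,y_m,Y_{m+1},…,Y_n) satisfies h(Q) ≤ h(P) + Σ_{k=1}^r (#I_k)·log(d_k+1) + Σ_{k=1}^r d_k·h((y_i)_{i ∈ I_k}). -/
open Finset MvPolynomial Function

section LocalMax

variable {L ι : Type*} [Semiring L]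

noncomputable def localMax (A : AbsoluteValue L ℝ) (S : Finset ι) (f : ι → L) : ℝ :=
  max 1 (⨆ i ∈ S, A (f i))

variable {A : AbsoluteValue L ℝ} {S : Finset ι} {f : ι → L}

lemma one_le_localMax : 1 ≤ localMax A S f := le_max_left _ _

lemma localMax_pos : 0 < localMax A S f := one_pos.trans_le one_le_localMax

lemma localMax_nonneg : 0 ≤ localMax A S f := localMax_pos.le

lemma le_localMax {i : ι} (hi : i ∈ S) : A (f i) ≤ localMax A S f := by
  have hbdd : BddAbove (Set.range fun j => ⨆ _ : j ∈ S, A (f j)) :=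
    ⟨∑ j ∈ S, A (f j), Set.forall_mem_range.2 fun j => Real.iSup_le
      (fun hj => single_le_sum (fun k _ => A.nonneg (f k)) hj) (sum_nonneg fun k _ => A.nonneg _)⟩
  exact (le_ciSup_of_le hbdd i (ciSup_pos hi).ge).trans (le_max_right _ _)

lemma localMax_le {R : ℝ} (hR : 1 ≤ R) (h : ∀ i ∈ S, A (f i) ≤ R) : localMax A S f ≤ R :=
  have hR0 : 0 ≤ R := zero_le_one.trans hR
  max_le hR (Real.iSup_le (fun i => Real.iSup_le (h i) hR0) hR0)

lemma localMax_eq_one (h : ∀ i ∈ S, A (f i) ≤ 1) : localMax A S f = 1 :=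
  (localMax_le le_rfl h).antisymm one_le_localMax

lemma log_localMax_le {κ : Type*} [Fintype κ] {c T : ℝ} {M : κ → ℝ} {d : κ → ℕ} (hc : 1 ≤ c)
    (hT : 1 ≤ T) (hM : ∀ k, 1 ≤ M k) (h : ∀ i ∈ S, A (f i) ≤ c * (T * ∏ k, M k ^ d k)) :
    Real.log (localMax A S f) ≤ Real.log T + Real.log c + ∑ k, d k * Real.log (M k) := by
  have hM0 : ∀ k, 0 < M k := fun k => one_pos.trans_le (hM k)
  have hprod : 1 ≤ ∏ k, M k ^ d k := Finset.one_le_prod fun k _ => one_le_pow₀ (hM k)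
  have hbound := localMax_le
    (one_le_mul_of_one_le_of_one_le hc (one_le_mul_of_one_le_of_one_le hT hprod)) h
  calc Real.log (localMax A S f) ≤ Real.log (c * (T * ∏ k, M k ^ d k)) :=
        Real.log_le_log localMax_pos hbound
    _ = _ := by
        rw [Real.log_mul (by positivity) (by positivity),
          Real.log_mul (by positivity) (by positivity),
          Real.log_prod fun k _ => (pow_pos (hM0 k) _).ne']
        simp only [Real.log_pow]
        ring

variable {V : Type*}

lemma finite_setOf_localMax_ne_one (absv : V → AbsoluteValue L ℝ)
    (hfin : ∀ x : L, x ≠ 0 → {v | absv v x ≠ 1}.Finite) (S : Finset ι) (f : ι → L) :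
    {v | localMax (absv v) S f ≠ 1}.Finite := by
  classical
  refine ((S.filter fun i => f i ≠ 0).finite_toSet.biUnion fun i hi => hfin (f i)
    (mem_filter.1 hi).2).subset fun v (hv : localMax (absv v) S f ≠ 1) => ?_
  by_contra hv'
  refine hv (localMax_eq_one fun i hi => ?_)
  by_cases hfi : f i = 0
  · simp [hfi]
  · simp only [Set.mem_iUnion, Set.mem_ofPred_eq, not_exists, not_not] at hv'
    exact (hv' i (by simpa [hi] using hfi)).le

lemma hasFiniteSupport_mul_log_localMax (absv : V → AbsoluteValue L ℝ) (wt : V → ℝ)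
    (hfin : ∀ x : L, x ≠ 0 → {v | absv v x ≠ 1}.Finite) (S : Finset ι) (f : ι → L) :
    HasFiniteSupport fun v => wt v * Real.log (localMax (absv v) S f) :=
  (finite_setOf_localMax_ne_one absv hfin S f).subset fun v hv h1 => hv (by simp [h1])

end LocalMax

lemma heightMv_eq_finsum {L V σ : Type*} [Field L] (absv : V → AbsoluteValue L ℝ) (wt : V → ℝ)
    (P : MvPolynomial σ L) :
    heightMv absv wt P = ∑ᶠ v, wt v * Real.log (localMax (absv v) P.support (coeff · P)) := rfl

lemma heightTuple_eq_finsum {L V ι : Type*} [Field L] [Fintype ι] (absv : V → AbsoluteValue L ℝ)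
    (wt : V → ℝ) (y : ι → L) :
    heightTuple absv wt y = ∑ᶠ v, wt v * Real.log (localMax (absv v) univ y) := by
  simp [heightTuple, localMax]

lemma finsum_mul_le_of_forall_le {V κ : Type*} [Fintype κ] {wt : V → ℝ} (hwt : ∀ v, 0 ≤ wt v)
    {arch : Set V} (harch : arch.Finite) (hsum : ∑ᶠ v ∈ arch, wt v = 1) {a b : V → ℝ}
    {g : κ → V → ℝ} (e : κ → ℝ) (c : ℝ) (ha : HasFiniteSupport fun v => wt v * a v)
    (hb : HasFiniteSupport fun v => wt v * b v) (hg : ∀ k, HasFiniteSupport fun v => wt v * g k v)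
    (h : ∀ v, a v ≤ b v + arch.indicator (fun _ => c) v + ∑ k, e k * g k v) :
    ∑ᶠ v, wt v * a v ≤ ∑ᶠ v, wt v * b v + c + ∑ k, e k * ∑ᶠ v, wt v * g k v := by
  have harch' : HasFiniteSupport fun v => arch.indicator wt v * c :=
    harch.subset fun v hv => by_contra fun hva => hv (by simp [hva])
  have hg' (k : κ) : HasFiniteSupport fun v => e k * (wt v * g k v) :=
    (hg k).subset fun v hv h0 => hv (by simp [h0])
  have hsum' : HasFiniteSupport fun v => ∑ k, e k * (wt v * g k v) :=
    ((finite_toSet univ).biUnion fun k _ => hg' k).subset fun v hv => by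
      obtain ⟨k, -, hk⟩ := exists_ne_zero_of_sum_ne_zero hv
      exact Set.mem_biUnion (mem_univ k) hk
  have hbc : HasFiniteSupport fun v => wt v * b v + arch.indicator wt v * c := hb.add harch'
  calc ∑ᶠ v, wt v * a v
      ≤ ∑ᶠ v, (wt v * b v + arch.indicator wt v * c + ∑ k, e k * (wt v * g k v)) := by
        refine finsum_le_finsum' ha (hbc.add hsum') fun v => ?_
        refine (mul_le_mul_of_nonneg_left (h v) (hwt v)).trans_eq ?_
        by_cases hv : v ∈ arch <;> simp [hv, mul_sum, mul_add, mul_left_comm]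
    _ = _ := by
        rw [finsum_add_distrib hbc hsum', finsum_add_distrib hb harch',
          finsum_sum_comm _ _ fun k _ => hg' k, ← finsum_mul, ← finsum_mem_def, hsum, one_mul]
        simp only [mul_finsum]

lemma prod_filter_lt_eq_prod_castLE {M : Type*} [CommMonoid M] {n m : ℕ} (hmn : m ≤ n)
    (g : Fin n → M) :
    ∏ i ∈ univ.filter (fun i : Fin n => (i : ℕ) < m), g i = ∏ i : Fin m, g (Fin.castLE hmn i) := by
  rw [← Fin.coe_castLEEmb, ← prod_map univ (Fin.castLEEmb hmn)]
  congr 1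
  ext i
  simp only [mem_filter, mem_univ, true_and, mem_map, Fin.coe_castLEEmb]
  exact ⟨fun h => ⟨⟨i, h⟩, rfl⟩, fun ⟨j, hj⟩ => hj ▸ j.isLt⟩

section PartialEval

variable {L : Type*} [CommSemiring L] {n m : ℕ}

def tailExponent (m : ℕ) (s : Fin n →₀ ℕ) : Fin n →₀ ℕ :=
  s.filter fun i => ¬ (i : ℕ) < m

lemma partialEval_monomial (hmn : m ≤ n) (y : Fin m → L) (s : Fin n →₀ ℕ) (a : L) :
    partialEval y (monomial s a) =
      monomial (tailExponent m s) (a * ∏ i : Fin m, y i ^ s (Fin.castLE hmn i)) := by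
  classical
  set F : Fin n → MvPolynomial (Fin n) L :=
    fun i => if h : (i : ℕ) < m then C (y ⟨i, h⟩) else X i
  have hhead : ((s.filter fun i : Fin n => (i : ℕ) < m).prod fun i k => F i ^ k) =
      C (∏ i : Fin m, y i ^ s (Fin.castLE hmn i)) := by
    calc _ = ∏ i ∈ univ.filter (fun i : Fin n => (i : ℕ) < m), F i ^ s i := by
          rw [Finsupp.prod_fintype _ _ fun i => pow_zero _, prod_filter]
          refine prod_congr rfl fun i _ => ?_
          rw [Finsupp.filter_apply]
          split_ifs <;> simp
      _ = ∏ i : Fin m, F (Fin.castLE hmn i) ^ s (Fin.castLE hmn i) :=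
          prod_filter_lt_eq_prod_castLE hmn _
      _ = _ := by simp [F, map_prod]
  have htail : ((s.filter fun i : Fin n => ¬ (i : ℕ) < m).prod fun i k => F i ^ k) =
      monomial (tailExponent m s) 1 := by
    rw [monomial_eq, C_1, one_mul]
    refine Finsupp.prod_congr fun i hi => ?_
    have hi' : ¬ (i : ℕ) < m := by simp_all
    simp [F, hi']
  rw [partialEval, aeval_monomial,
    ← Finsupp.prod_filter_mul_prod_filter_not (fun i : Fin n => (i : ℕ) < m), hhead, htail,
    algebraMap_eq, ← mul_assoc, ← C_mul, C_mul_monomial, mul_one]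

lemma coeff_partialEval (hmn : m ≤ n) (y : Fin m → L) (P : MvPolynomial (Fin n) L)
    (t : Fin n →₀ ℕ) :
    coeff t (partialEval y P) = ∑ s ∈ P.support with tailExponent m s = t,
      coeff s P * ∏ i : Fin m, y i ^ s (Fin.castLE hmn i) := by
  classical
  conv_lhs => rw [P.as_sum, partialEval, map_sum]
  simp only [← partialEval.eq_def, partialEval_monomial hmn, coeff_sum, coeff_monomial, sum_filter]

lemma eq_of_tailExponent_eq (hmn : m ≤ n) {s s' : Fin n →₀ ℕ}
    (hhead : ∀ i : Fin m, s (Fin.castLE hmn i) = s' (Fin.castLE hmn i))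
    (htail : tailExponent m s = tailExponent m s') : s = s' := by
  ext i
  by_cases hi : (i : ℕ) < m
  · exact hhead ⟨i, hi⟩
  · have := DFunLike.congr_fun htail i
    simpa only [tailExponent, Finsupp.filter_apply, if_pos hi] using this

lemma card_filter_tailExponent_eq_le {κ : Type*} [Fintype κ] [DecidableEq κ] (hmn : m ≤ n)
    (π : Fin m → κ) (d : κ → ℕ) {S : Finset (Fin n →₀ ℕ)}
    (hS : ∀ s ∈ S, ∀ k, ∑ i ∈ univ.filter (fun i => π i = k), s (Fin.castLE hmn i) ≤ d k)
    (t : Fin n →₀ ℕ) :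
    #{s ∈ S | tailExponent m s = t} ≤ ∏ k, (d k + 1) ^ #{i | π i = k} := by
  calc #{s ∈ S | tailExponent m s = t}
      ≤ #(Fintype.piFinset fun i : Fin m => range (d (π i) + 1)) := by
        refine card_le_card_of_injOn (fun s i => s (Fin.castLE hmn i)) (fun s hs => ?_)
          fun s hs s' hs' h => ?_
        · have hsS := (mem_filter.1 hs).1
          simp only [Fintype.coe_piFinset, Set.mem_pi, Set.mem_univ, mem_coe,
            mem_range, Nat.lt_succ_iff, forall_const]
          exact fun i => (single_le_sum (s := univ.filter fun j => π j = π i)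
            (fun j _ => Nat.zero_le (s (Fin.castLE hmn j))) (by simp)).trans (hS s hsS (π i))
        · exact eq_of_tailExponent_eq hmn (congrFun h)
            ((mem_filter.1 hs).2.trans (mem_filter.1 hs').2.symm)
    _ = ∏ k, (d k + 1) ^ #{i | π i = k} := by
        rw [Fintype.card_piFinset]
        simp only [card_range]
        rw [← prod_fiberwise' univ π (fun k => d k + 1)]
        simp

end PartialEval

lemma AbsoluteValue.map_prod_pow_le {R ι κ : Type*} [CommSemiring R] [Nontrivial R] [Fintype ι]
    [Fintype κ] [DecidableEq κ] (A : AbsoluteValue R ℝ) (π : ι → κ) {y : ι → R} {e : ι → ℕ}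
    {M : κ → ℝ} {d : κ → ℕ} (hM : ∀ k, 1 ≤ M k) (hy : ∀ i, A (y i) ≤ M (π i))
    (he : ∀ k, ∑ i ∈ univ.filter (fun i => π i = k), e i ≤ d k) :
    A (∏ i, y i ^ e i) ≤ ∏ k, M k ^ d k :=
  have hM0 : ∀ k, 0 ≤ M k := fun k => zero_le_one.trans (hM k)
  calc A (∏ i, y i ^ e i) = ∏ i, A (y i) ^ e i := by simp only [A.map_prod, A.map_pow]
    _ ≤ ∏ i, M (π i) ^ e i :=
        prod_le_prod (fun i _ => pow_nonneg (A.nonneg _) _)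
          fun i _ => pow_le_pow_left₀ (A.nonneg _) (hy i) _
    _ = ∏ k, M k ^ ∑ i ∈ univ.filter (fun i => π i = k), e i := by
        rw [← prod_fiberwise univ π]
        refine prod_congr rfl fun k _ => ?_
        rw [← prod_pow_eq_pow_sum]
        exact prod_congr rfl fun i hi => by rw [(mem_filter.1 hi).2]
    _ ≤ ∏ k, M k ^ d k :=
        prod_le_prod (fun k _ => pow_nonneg (hM0 k) _) fun k _ => pow_le_pow_right₀ (hM k) (he k)

section CoeffBound

variable {L κ : Type*} [Field L] [Fintype κ] [DecidableEq κ] {n m : ℕ}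
  (A : AbsoluteValue L ℝ) {P : MvPolynomial (Fin n) L} (y : Fin m → L) (π : Fin m → κ)
  {d : κ → ℕ}

lemma abv_coeff_mul_prod_pow_le (hmn : m ≤ n)
    (hd : ∀ s ∈ P.support, ∀ k, ∑ i ∈ univ.filter (fun i => π i = k), s (Fin.castLE hmn i) ≤ d k)
    {s : Fin n →₀ ℕ} (hs : s ∈ P.support) :
    A (coeff s P * ∏ i : Fin m, y i ^ s (Fin.castLE hmn i)) ≤
      localMax A P.support (coeff · P) *
        ∏ k, localMax A univ (fun i : {i // π i = k} => y i) ^ d k := by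
  rw [map_mul]
  exact mul_le_mul (le_localMax hs)
    (A.map_prod_pow_le π (fun k => one_le_localMax)
      (fun i => le_localMax (f := fun j : {j // π j = π i} => y j) (mem_univ ⟨i, rfl⟩)) (hd s hs))
    (A.nonneg _) localMax_nonneg

lemma abv_coeff_partialEval_le (hmn : m ≤ n)
    (hd : ∀ s ∈ P.support, ∀ k, ∑ i ∈ univ.filter (fun i => π i = k), s (Fin.castLE hmn i) ≤ d k)
    (t : Fin n →₀ ℕ) :
    A (coeff t (partialEval y P)) ≤ (∏ k, ((d k : ℝ) + 1) ^ #{i | π i = k}) *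
      (localMax A P.support (coeff · P) *
        ∏ k, localMax A univ (fun i : {i // π i = k} => y i) ^ d k) := by
  rw [coeff_partialEval hmn]
  calc _ ≤ ∑ s ∈ P.support with tailExponent m s = t,
        A (coeff s P * ∏ i : Fin m, y i ^ s (Fin.castLE hmn i)) := A.sum_le _ _
    _ ≤ #{s ∈ P.support | tailExponent m s = t} • (localMax A P.support (coeff · P) *
        ∏ k, localMax A univ (fun i : {i // π i = k} => y i) ^ d k) :=
        sum_le_card_nsmul _ _ _ fun s hs =>
          abv_coeff_mul_prod_pow_le A y π hmn hd (mem_filter.1 hs).1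
    _ ≤ _ := by
        rw [nsmul_eq_mul]
        refine mul_le_mul_of_nonneg_right
          (by exact_mod_cast card_filter_tailExponent_eq_le hmn π d hd t) ?_
        exact mul_nonneg localMax_nonneg (prod_nonneg fun k _ => pow_nonneg localMax_nonneg _)

lemma abv_coeff_partialEval_le_of_isNonarchimedean (hA : IsNonarchimedean A) (hmn : m ≤ n)
    (hd : ∀ s ∈ P.support, ∀ k, ∑ i ∈ univ.filter (fun i => π i = k), s (Fin.castLE hmn i) ≤ d k)
    (t : Fin n →₀ ℕ) :
    A (coeff t (partialEval y P)) ≤ localMax A P.support (coeff · P) *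
        ∏ k, localMax A univ (fun i : {i // π i = k} => y i) ^ d k := by
  rw [coeff_partialEval hmn]
  obtain hempty | hne := (P.support.filter fun s => tailExponent m s = t).eq_empty_or_nonempty
  · rw [hempty, sum_empty, map_zero]
    exact mul_nonneg localMax_nonneg (prod_nonneg fun k _ => pow_nonneg localMax_nonneg _)
  · obtain ⟨s, hs, hle⟩ := hA.finset_image_add_of_nonempty _ hne
    exact hle.trans (abv_coeff_mul_prod_pow_le A y π hmn hd (mem_filter.1 hs).1)

end CoeffBound

theorem height_partialEval_le_partition_general
    {L V : Type*} [Field L]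
    (absv : V → AbsoluteValue L ℝ) (wt : V → ℝ) (arch : Set V)
    (harch : arch.Finite) (hwt : ∀ v, 0 ≤ wt v)
    (hna : ∀ v ∉ arch, IsNonarchimedean ⇑(absv v))
    (hsum : ∑ᶠ v ∈ arch, wt v = 1)
    (hfin : ∀ x : L, x ≠ 0 → {v | absv v x ≠ 1}.Finite)
    {n : ℕ} (P : MvPolynomial (Fin n) L)
    (m : ℕ) (hmn : m ≤ n) (y : Fin m → L)
    (r : ℕ) (π : Fin m → Fin r) (dk : Fin r → ℕ)
    (hdk : ∀ s ∈ P.support, ∀ k : Fin r,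
      (∑ i ∈ Finset.univ.filter fun i : Fin m => π i = k,
        s (Fin.castLE hmn i)) ≤ dk k) :
    heightMv absv wt (partialEval y P) ≤
      heightMv absv wt P
        + ∑ k : Fin r, ((Finset.univ.filter fun i : Fin m => π i = k).card : ℝ)
            * Real.log (dk k + 1)
        + ∑ k : Fin r, (dk k : ℝ)
            * heightTuple absv wt (fun i : {i : Fin m // π i = k} => y i) := by
  set N : ℝ := ∏ k, ((dk k : ℝ) + 1) ^ #{i | π i = k}
  have hN : 1 ≤ N := Finset.one_le_prod fun k _ => one_le_pow₀ (by simp)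
  have hlocal (v : V) :
      Real.log (localMax (absv v) (partialEval y P).support (coeff · (partialEval y P))) ≤
        Real.log (localMax (absv v) P.support (coeff · P)) + arch.indicator (fun _ => Real.log N) v
        + ∑ k, (dk k : ℝ) * Real.log (localMax (absv v) univ fun i : {i // π i = k} => y i) := by
    by_cases hv : v ∈ arch
    · rw [Set.indicator_of_mem hv]
      exact log_localMax_le hN one_le_localMax (fun k => one_le_localMax)
        fun t _ => abv_coeff_partialEval_le (absv v) y π hmn hdk t
    · simpa [Set.indicator_of_notMem hv] using log_localMax_le le_rfl one_le_localMax
        (fun k => one_le_localMax) fun t _ => by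
          rw [one_mul]
          exact abv_coeff_partialEval_le_of_isNonarchimedean (absv v) y π (hna v hv) hmn hdk t
  have hlogN : Real.log N = ∑ k, (#{i | π i = k} : ℝ) * Real.log (dk k + 1) := by
    rw [Real.log_prod fun k _ => by positivity]
    simp only [Real.log_pow]
  rw [heightMv_eq_finsum, heightMv_eq_finsum, ← hlogN]
  simp only [heightTuple_eq_finsum]
  exact finsum_mul_le_of_forall_le hwt harch hsum _ _
    (hasFiniteSupport_mul_log_localMax absv wt hfin _ _)
    (hasFiniteSupport_mul_log_localMax absv wt hfin _ _)
    (fun k => hasFiniteSupport_mul_log_localMax absv wt hfin _ _) hlocal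

/-- Refined height bound for partial evaluation: if `{1,…,m}` is partitioned
into parts `I_1, …, I_r` (encoded by `π : Fin m → Fin r`) and `d_k` bounds the
total degree of `P` in the variables of `I_k`, then
`h(Q) ≤ h(P) + Σ_k #I_k·log(d_k+1) + Σ_k d_k·h((y_i)_{i ∈ I_k})`. -/
theorem height_partialEval_le_partition
    {L V : Type*} [Field L]
    (absv : V → AbsoluteValue L ℝ) (wt : V → ℝ) (arch : Set V)
    (harch : arch.Finite) (hwt : ∀ v, 0 ≤ wt v)
    (hna : ∀ v ∉ arch, IsNonarchimedean ⇑(absv v))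
    (hsum : ∑ᶠ v ∈ arch, wt v = 1)
    (hfin : ∀ x : L, x ≠ 0 → {v | absv v x ≠ 1}.Finite)
    {n : ℕ} (P : MvPolynomial (Fin n) L) (d : ℕ) (hd : P.totalDegree ≤ d)
    (m : ℕ) (hmn : m ≤ n) (y : Fin m → L)
    (r : ℕ) (π : Fin m → Fin r) (dk : Fin r → ℕ)
    (hdk : ∀ s ∈ P.support, ∀ k : Fin r,
      (∑ i ∈ Finset.univ.filter fun i : Fin m => π i = k,
        s (Fin.castLE hmn i)) ≤ dk k) :
    heightMv absv wt (partialEval y P) ≤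
      heightMv absv wt P
        + ∑ k : Fin r, ((Finset.univ.filter fun i : Fin m => π i = k).card : ℝ)
            * Real.log (dk k + 1)
        + ∑ k : Fin r, (dk k : ℝ)
            * heightTuple absv wt (fun i : {i : Fin m // π i = k} => y i) :=
  height_partialEval_le_partition_general absv wt arch harch hwt hna hsum hfin P m hmn y r π dk hdk
end

section
/- Let V be a finite-dimensional ℚ-vector space. The map Λ ↦ Λ ⊗ Ẑ is a bijection between lattices in V (ℤ-spans of ℚ-bases of V) and lattices in V ⊗ 𝔸_f (products over primes p of ℤ_p-lattices in V ⊗ ℚ_p that equal a fixed integral model for almost all p), with inverse given by intersection with V. -/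
open scoped TensorProduct

variable (V : Type*) [AddCommGroup V] [Module ℚ V] [FiniteDimensional ℚ V]

/-- A lattice in a finite-dimensional `ℚ`-vector space `V`: the `ℤ`-span of a
`ℚ`-basis of `V`. -/
def IsZLatticeIn (Λ : Submodule ℤ V) : Prop :=
  ∃ b : Module.Basis (Fin (Module.finrank ℚ V)) ℚ V,
    Λ = Submodule.span ℤ (Set.range ⇑b)

section LocalData

variable (p : ℕ) [Fact p.Prime]

/-- `ℤ_p`-module structure on `V ⊗ ℚ_p`, by restriction of scalars. -/
noncomputable instance padicTensorModule : Module ℤ_[p] (ℚ_[p] ⊗[ℚ] V) :=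
  Module.compHom _ (algebraMap ℤ_[p] ℚ_[p])

/-- The natural localization map `V → V ⊗ ℚ_p`. -/
noncomputable def toLocal : V → ℚ_[p] ⊗[ℚ] V := fun x => (1 : ℚ_[p]) ⊗ₜ[ℚ] x

/-- A `ℤ_p`-lattice in `V ⊗ ℚ_p`: the `ℤ_p`-span of a `ℚ_p`-basis. -/
def IsZpLattice (M : Submodule ℤ_[p] (ℚ_[p] ⊗[ℚ] V)) : Prop :=
  ∃ b : Module.Basis (Fin (Module.finrank ℚ V)) ℚ_[p] (ℚ_[p] ⊗[ℚ] V),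
    M = Submodule.span ℤ_[p] (Set.range ⇑b)

/-- The localization `Λ ⊗ ℤ_p` of a `ℤ`-submodule `Λ ⊆ V` at the prime `p`. -/
noncomputable def localizeLat (Λ : Submodule ℤ V) :
    Submodule ℤ_[p] (ℚ_[p] ⊗[ℚ] V) :=
  Submodule.span ℤ_[p] (toLocal V p '' (Λ : Set V))

end LocalData

/-- Families of `ℤ_p`-submodules of `V ⊗ ℚ_p`, one for each prime `p`. -/
noncomputable def LocalLatticeFamily : Type _ :=
  ∀ p : Nat.Primes, letI : Fact (p : ℕ).Prime := ⟨p.2⟩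
    Submodule ℤ_[(p : ℕ)] (ℚ_[(p : ℕ)] ⊗[ℚ] V)

/-- The family of localizations `(Λ ⊗ ℤ_p)_p`, i.e. the map `Λ ↦ Λ ⊗ Ẑ`. -/
noncomputable def adelicOf (Λ : Submodule ℤ V) : LocalLatticeFamily V :=
  fun p => letI : Fact (p : ℕ).Prime := ⟨p.2⟩; localizeLat V (p : ℕ) Λ

/-- A lattice in `V ⊗ 𝔸_f`: a family of `ℤ_p`-lattices in `V ⊗ ℚ_p` that
agrees with the localizations of a fixed integral model `Λ₀` for all but
finitely many primes. -/
def IsAdelicLattice (Λ₀ : Submodule ℤ V) (M : LocalLatticeFamily V) : Prop :=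
  (∀ p : Nat.Primes, letI : Fact (p : ℕ).Prime := ⟨p.2⟩
      IsZpLattice V (p : ℕ) (M p)) ∧
    {p : Nat.Primes | M p ≠ adelicOf V Λ₀ p}.Finite

/-- The intersection with `V` of a family of local lattices. -/
noncomputable def globalPart (M : LocalLatticeFamily V) : Set V :=
  ⋂ p : Nat.Primes, (letI : Fact (p : ℕ).Prime := ⟨p.2⟩
    toLocal V (p : ℕ) ⁻¹' (M p : Set (ℚ_[(p : ℕ)] ⊗[ℚ] V)))

/-!
A lattice is the `ℤ`-span of a `ℚ`-basis `b`, and its localization at `p` is the `ℤ_p`-span of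
`1 ⊗ b`. So `x ∈ V` lies in every localization iff its `b`-coordinates are `p`-adically integral
for all `p`, i.e. are integers: a lattice is the intersection of its localizations, which gives
injectivity. Two lattices contain nonzero integer multiples of each other, say by `N`, so their
localizations agree at every `p ∤ N`.

Conversely, a family `M` of local lattices that is almost everywhere `Λ₀ ⊗ ℤ_p` is squeezed
between `N • (Λ₀ ⊗ ℤ_p)` and `N⁻¹ • (Λ₀ ⊗ ℤ_p)` for a single integer `N ≠ 0`; hence so is
`Λ = ⋂ₚ (M_p ∩ V)`, which makes it a lattice. To see `Λ ⊗ ℤ_p = M_p`, approximate `y ∈ M_p`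
modulo `N • (Λ₀ ⊗ ℤ_p)` by a vector `p⁻ᵏ N u` with `u ∈ Λ₀`: it lies in `M_q` for `q ≠ p`
because `p` is a `q`-adic unit, and in `M_p` because it is close to `y`; thus it lies in `Λ`.
-/

open Submodule Module Filter

instance (p : Nat.Primes) : Fact (p : ℕ).Prime := ⟨p.2⟩

theorem Submodule.zsmul_mem_of_mem_span {R M : Type*} [Ring R] [AddCommGroup M] [Module R M]
    {L : Submodule R M} {s : Set M} {N : ℤ} (h : ∀ x ∈ s, N • x ∈ L) {x : M}
    (hx : x ∈ span R s) : N • x ∈ L :=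
  (span_le.2 h : span R s ≤ L.comap (N • LinearMap.id)) hx

theorem Submodule.zsmul_mem_of_dvd {R M : Type*} [Ring R] [AddCommGroup M] [Module R M]
    {L L' : Submodule R M} {N N' : ℤ} (h : ∀ x ∈ L, N • x ∈ L') (hN : N ∣ N') :
    ∀ x ∈ L, N' • x ∈ L' := by
  obtain ⟨k, rfl⟩ := hN
  intro x hx
  rw [mul_comm, mul_zsmul]
  exact zsmul_mem (h x hx) k

theorem Rat.den_eq_one_of_forall_norm_padic_le_one {q : ℚ}
    (h : ∀ (p : ℕ) [Fact p.Prime], ‖(q : ℚ_[p])‖ ≤ 1) : q.den = 1 := by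
  by_contra hq
  obtain ⟨p, hp, hpq⟩ := Nat.exists_prime_and_dvd hq
  have := Fact.mk hp
  have hunit := PadicInt.isUnit_den q (h p)
  rw [PadicInt.isUnit_iff, PadicInt.norm_natCast_eq_one_iff] at hunit
  exact (Nat.Prime.dvd_iff_not_coprime hp).1 hpq hunit

section Padic

variable {p : ℕ} [Fact p.Prime]

theorem Padic.norm_intCast_eq_one_of_not_dvd {N : ℤ} (hN : ¬ (p : ℤ) ∣ N) : ‖(N : ℚ_[p])‖ = 1 :=
  le_antisymm (Padic.norm_int_le_one N) (not_lt.1 (mt Padic.norm_intCast_lt_one_iff.1 hN))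

theorem Padic.eventually_norm_pow_mul_le_one (a : ℚ_[p]) :
    ∀ᶠ k : ℕ in atTop, ‖(p : ℚ_[p]) ^ k * a‖ ≤ 1 := by
  have h := (tendsto_pow_atTop_nhds_zero_of_norm_lt_one (Padic.norm_p_lt_one (p := p))).mul_const a
  rw [zero_mul] at h
  filter_upwards [h.eventually (Metric.closedBall_mem_nhds 0 one_pos)] with k hk
  simpa using hk

theorem PadicInt.exists_nat_norm_sub_le (x : ℤ_[p]) (k : ℕ) :
    ∃ n : ℕ, ‖(x : ℚ_[p]) - n‖ ≤ ‖(p : ℚ_[p]) ^ k‖ :=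
  ⟨x.appr k, by
    rw [Padic.norm_p_pow]
    exact (PadicInt.norm_le_pow_iff_mem_span_pow _ k).2 (x.appr_spec k)⟩

theorem Padic.eventually_exists_int_approx {m : ℚ_[p]} (hm : m ≠ 0) (γ : ℚ_[p]) :
    ∀ᶠ k : ℕ in atTop, ∃ n : ℤ, ‖((p : ℚ_[p]) ^ k)⁻¹ * (m * n) - γ‖ ≤ ‖m‖ := by
  filter_upwards [Padic.eventually_norm_pow_mul_le_one (m⁻¹ * γ)] with k hk
  obtain ⟨n, hn⟩ := PadicInt.exists_nat_norm_sub_le (⟨_, hk⟩ : ℤ_[p]) k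
  set w := (p : ℚ_[p]) ^ k * (m⁻¹ * γ)
  have hp : (p : ℚ_[p]) ^ k ≠ 0 := pow_ne_zero _ (Nat.cast_ne_zero.2 (Fact.out : p.Prime).ne_zero)
  refine ⟨n, ?_⟩
  have hfactor : ((p : ℚ_[p]) ^ k)⁻¹ * (m * n) - γ = ((p : ℚ_[p]) ^ k)⁻¹ * m * (n - w) := by
    simp only [w]
    field_simp
  rw [Int.cast_natCast, hfactor, norm_mul, norm_mul, norm_inv, norm_sub_rev]
  calc ‖(p : ℚ_[p]) ^ k‖⁻¹ * ‖m‖ * ‖w - n‖ ≤ ‖(p : ℚ_[p]) ^ k‖⁻¹ * ‖m‖ * ‖(p : ℚ_[p]) ^ k‖ := by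
        gcongr
    _ = ‖m‖ := by field_simp [norm_ne_zero_iff.2 hp]

variable {W : Type*} [AddCommGroup W] [Module ℚ_[p] W] [Module ℤ_[p] W]
  [IsScalarTower ℤ_[p] ℚ_[p] W]

theorem smul_mem_of_norm_le_one (L : Submodule ℤ_[p] W) {a : ℚ_[p]} (ha : ‖a‖ ≤ 1) {x : W}
    (hx : x ∈ L) : a • x ∈ L := by
  let c : ℤ_[p] := ⟨a, ha⟩
  convert L.smul_mem c hx using 1
  exact algebraMap_smul ℚ_[p] c x

theorem mem_span_basis_iff_norm_repr_le_one {ι : Type*} (d : Basis ι ℚ_[p] W) (x : W) :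
    x ∈ span ℤ_[p] (Set.range d) ↔ ∀ i, ‖d.repr x i‖ ≤ 1 := by
  rw [Basis.mem_span_iff_repr_mem]
  exact forall_congr' fun i => ⟨fun ⟨a, ha⟩ => ha ▸ a.2, fun h => ⟨⟨_, h⟩, rfl⟩⟩

theorem exists_pow_zsmul_mem_span_basis {ι κ : Type*} [Finite ι] [Finite κ]
    (d : Basis ι ℚ_[p] W) (d' : Basis κ ℚ_[p] W) :
    ∃ k : ℕ, ∀ z ∈ span ℤ_[p] (Set.range d), (p ^ k : ℤ) • z ∈ span ℤ_[p] (Set.range d') := by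
  obtain ⟨k, hk⟩ := (eventually_all.2 fun i => eventually_all.2 fun j =>
    Padic.eventually_norm_pow_mul_le_one (d'.repr (d i) j)).exists
  refine ⟨k, fun z => zsmul_mem_of_mem_span ?_⟩
  rintro _ ⟨i, rfl⟩
  rw [mem_span_basis_iff_norm_repr_le_one]
  intro j
  simpa [← Int.cast_smul_eq_zsmul ℚ_[p]] using hk i j

end Padic

section Localization

variable {E : Type*} [AddCommGroup E] [Module ℚ E] (p : ℕ) [Fact p.Prime]

-- `ℚ_[p] ⊗[ℚ] E` also carries the `ℤ_[p]`-action `TensorProduct.leftModule`, which agrees with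
-- `padicTensorModule` but not reducibly; the lattices here are modules for the latter.
instance : @IsScalarTower ℤ_[p] ℚ_[p] (ℚ_[p] ⊗[ℚ] E) _ _ (padicTensorModule E p).toSMul :=
  ⟨fun a b x => mul_smul (a : ℚ_[p]) b x⟩

theorem toLocal_eq_mk : toLocal E p = TensorProduct.mk ℚ ℚ_[p] E 1 := rfl

theorem toLocal_add (x y : E) : toLocal E p (x + y) = toLocal E p x + toLocal E p y := by
  simp [toLocal_eq_mk, TensorProduct.tmul_add]

theorem toLocal_zsmul (n : ℤ) (x : E) : toLocal E p (n • x) = n • toLocal E p x := by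
  simp [toLocal_eq_mk]

theorem toLocal_ratSMul (q : ℚ) (x : E) : toLocal E p (q • x) = (q : ℚ_[p]) • toLocal E p x := by
  rw [toLocal_eq_mk, map_smul, ← algebraMap_smul ℚ_[p]]
  rfl

theorem Module.Basis.baseChange_repr_toLocal {ι : Type*} (b : Basis ι ℚ E) (x : E) (i : ι) :
    (b.baseChange ℚ_[p]).repr (toLocal E p x) i = (b.repr x i : ℚ_[p]) := by
  simp [toLocal, Basis.baseChange_repr_tmul, Algebra.smul_def]

theorem toLocal_mem_localizeLat {Λ : Submodule ℤ E} {x : E} (hx : x ∈ Λ) :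
    toLocal E p x ∈ localizeLat E p Λ :=
  subset_span ⟨x, hx, rfl⟩

theorem localizeLat_le_iff {Λ : Submodule ℤ E} {L : Submodule ℤ_[p] (ℚ_[p] ⊗[ℚ] E)} :
    localizeLat E p Λ ≤ L ↔ ∀ x ∈ Λ, toLocal E p x ∈ L := by
  simp [localizeLat, span_le, Set.subset_def]

theorem localizeLat_span_basis {ι : Type*} (b : Basis ι ℚ E) :
    localizeLat E p (span ℤ (Set.range b)) = span ℤ_[p] (Set.range (b.baseChange ℚ_[p])) := by
  apply le_antisymm
  · rw [localizeLat_le_iff]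
    intro x hx
    induction hx using span_induction with
    | mem x hx =>
      obtain ⟨i, rfl⟩ := hx
      exact subset_span ⟨i, by simp [toLocal]⟩
    | zero => simp [toLocal]
    | add x y _ _ hx hy => rw [toLocal_add]; exact add_mem hx hy
    | smul n x _ hx => rw [toLocal_zsmul]; exact zsmul_mem hx n
  · rw [span_le]
    rintro _ ⟨i, rfl⟩
    rw [SetLike.mem_coe, Basis.baseChange_apply]
    exact toLocal_mem_localizeLat p (subset_span ⟨i, rfl⟩)

theorem mem_localizeLat_span_basis_iff {ι : Type*} (b : Basis ι ℚ E) (z : ℚ_[p] ⊗[ℚ] E) :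
    z ∈ localizeLat E p (span ℤ (Set.range b)) ↔ ∀ i, ‖(b.baseChange ℚ_[p]).repr z i‖ ≤ 1 := by
  rw [localizeLat_span_basis, mem_span_basis_iff_norm_repr_le_one]

theorem IsZLatticeIn.isZpLattice_localizeLat {Λ : Submodule ℤ E} (hΛ : IsZLatticeIn E Λ) :
    IsZpLattice E p (localizeLat E p Λ) := by
  obtain ⟨b, rfl⟩ := hΛ
  exact ⟨b.baseChange ℚ_[p], localizeLat_span_basis p b⟩

theorem zsmul_mem_localizeLat {Λ Λ' : Submodule ℤ E} {N : ℤ} (h : ∀ x ∈ Λ, N • x ∈ Λ') :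
    ∀ z ∈ localizeLat E p Λ, N • z ∈ localizeLat E p Λ' := by
  refine fun z => zsmul_mem_of_mem_span ?_
  rintro _ ⟨x, hx, rfl⟩
  rw [← toLocal_zsmul]
  exact toLocal_mem_localizeLat p (h x hx)

theorem localizeLat_le_of_zsmul_mem {Λ Λ' : Submodule ℤ E} {N : ℤ} (hN : ¬ (p : ℤ) ∣ N)
    (h : ∀ x ∈ Λ, N • x ∈ Λ') : localizeLat E p Λ ≤ localizeLat E p Λ' := by
  rw [localizeLat_le_iff]
  intro x hx
  have hN1 := Padic.norm_intCast_eq_one_of_not_dvd hN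
  have hN0 : (N : ℚ_[p]) ≠ 0 := norm_ne_zero_iff.1 (hN1 ▸ one_ne_zero)
  have hx_eq : toLocal E p x = (N : ℚ_[p])⁻¹ • toLocal E p (N • x) := by
    rw [toLocal_zsmul, ← Int.cast_smul_eq_zsmul ℚ_[p], inv_smul_smul₀ hN0]
  rw [hx_eq]
  exact smul_mem_of_norm_le_one _ (by simp [hN1]) (toLocal_mem_localizeLat p (h x hx))

end Localization

theorem Nat.Primes.finite_setOf_dvd {N : ℤ} (hN : N ≠ 0) : {p : Nat.Primes | (p : ℤ) ∣ N}.Finite :=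
  (N.natAbs.primeFactors.finite_toSet.preimage Nat.Primes.coe_nat_injective.injOn).subset
    fun p hp => Nat.mem_primeFactors.2 ⟨p.2, Int.natCast_dvd.1 hp, Int.natAbs_ne_zero.2 hN⟩

section Global

variable {E : Type*} [AddCommGroup E] [Module ℚ E]

theorem mem_span_basis_of_forall_toLocal_mem {ι : Type*} (b : Basis ι ℚ E) {x : E}
    (hx : ∀ (p : ℕ) [Fact p.Prime], toLocal E p x ∈ localizeLat E p (span ℤ (Set.range b))) :
    x ∈ span ℤ (Set.range b) := by
  rw [Basis.mem_span_iff_repr_mem]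
  intro i
  have hden := Rat.den_eq_one_of_forall_norm_padic_le_one fun p _ => by
    simpa [Basis.baseChange_repr_toLocal] using (mem_localizeLat_span_basis_iff p b _).1 (hx p) i
  exact ⟨_, Rat.coe_int_num_of_den_eq_one hden⟩

theorem IsZLatticeIn.mem_iff_forall_toLocal_mem {Λ : Submodule ℤ E} (hΛ : IsZLatticeIn E Λ)
    {x : E} : x ∈ Λ ↔ ∀ p : Nat.Primes, toLocal E p x ∈ localizeLat E p Λ := by
  obtain ⟨b, rfl⟩ := hΛ
  exact ⟨fun hx p => toLocal_mem_localizeLat _ hx,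
    fun hx => mem_span_basis_of_forall_toLocal_mem b fun p _ => hx ⟨p, Fact.out⟩⟩

theorem IsZLatticeIn.coe_eq_globalPart {Λ : Submodule ℤ E} (hΛ : IsZLatticeIn E Λ) :
    (Λ : Set E) = globalPart E (adelicOf E Λ) := by
  ext x
  simp only [globalPart, Set.mem_iInter, Set.mem_preimage, SetLike.mem_coe]
  exact hΛ.mem_iff_forall_toLocal_mem

theorem exists_zsmul_mem_span_basis {ι κ : Type*} [Finite ι] [Finite κ] (b : Basis ι ℚ E)
    (c : Basis κ ℚ E) :
    ∃ N : ℤ, N ≠ 0 ∧ ∀ x ∈ span ℤ (Set.range b), N • x ∈ span ℤ (Set.range c) := by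
  obtain ⟨⟨N, hN⟩, hint⟩ := IsLocalization.exist_integer_multiples_of_finite
    (nonZeroDivisors ℤ) fun ij : ι × κ => c.repr (b ij.1) ij.2
  refine ⟨N, nonZeroDivisors.ne_zero hN, fun x => zsmul_mem_of_mem_span ?_⟩
  rintro _ ⟨i, rfl⟩
  rw [Basis.mem_span_iff_repr_mem]
  intro j
  obtain ⟨z, hz⟩ := hint (i, j)
  exact ⟨z, by simpa using hz⟩

theorem IsZLatticeIn.exists_zsmul_mem {Λ Λ' : Submodule ℤ E} (hΛ : IsZLatticeIn E Λ)
    (hΛ' : IsZLatticeIn E Λ') : ∃ N : ℤ, N ≠ 0 ∧ ∀ x ∈ Λ, N • x ∈ Λ' := by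
  obtain ⟨b, rfl⟩ := hΛ
  obtain ⟨c, rfl⟩ := hΛ'
  exact exists_zsmul_mem_span_basis b c

theorem IsZLatticeIn.isAdelicLattice {Λ Λ₀ : Submodule ℤ E} (hΛ : IsZLatticeIn E Λ)
    (hΛ₀ : IsZLatticeIn E Λ₀) : IsAdelicLattice E Λ₀ (adelicOf E Λ) := by
  refine ⟨fun p => hΛ.isZpLattice_localizeLat p, ?_⟩
  obtain ⟨N, hN, h⟩ := hΛ.exists_zsmul_mem hΛ₀
  obtain ⟨N', hN', h'⟩ := hΛ₀.exists_zsmul_mem hΛ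
  refine (Nat.Primes.finite_setOf_dvd (mul_ne_zero hN hN')).subset fun p hp => ?_
  by_contra hdvd
  obtain ⟨hpN, hpN'⟩ := not_or.1 (mt (Nat.prime_iff_prime_int.1 p.2).dvd_mul.2 hdvd)
  exact hp (le_antisymm (localizeLat_le_of_zsmul_mem p hpN h)
    (localizeLat_le_of_zsmul_mem p hpN' h'))

theorem IsZLatticeIn.isLattice {Λ : Submodule ℤ E} (hΛ : IsZLatticeIn E Λ) : Λ.IsLattice ℚ := by
  obtain ⟨b, rfl⟩ := hΛ
  exact ⟨fg_span (Set.finite_range b), by rw [span_span_of_tower, b.span_eq]⟩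

theorem IsZLatticeIn.of_isLattice (Λ : Submodule ℤ E) [Λ.IsLattice ℚ] : IsZLatticeIn E Λ := by
  let β := Module.Free.chooseBasis ℤ Λ
  let b := β.extendOfIsLattice ℚ
  refine ⟨b.reindex (Fintype.equivFinOfCardEq (finrank_eq_card_basis b).symm), ?_⟩
  have hb : Set.range b = Λ.subtype '' Set.range β := by
    rw [← Set.range_comp]
    exact congrArg Set.range (funext fun k => Basis.extendOfIsLattice_apply ℚ β k)
  rw [Basis.range_reindex, hb, span_image, β.span_eq, map_subtype_top]

theorem IsZLatticeIn.of_zsmul_mem {Λ₀ Λ : Submodule ℤ E} (hΛ₀ : IsZLatticeIn E Λ₀) {N : ℤ}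
    (hN : N ≠ 0) (h₀ : ∀ x ∈ Λ₀, N • x ∈ Λ) (h : ∀ x ∈ Λ, N • x ∈ Λ₀) : IsZLatticeIn E Λ := by
  have := hΛ₀.isLattice
  have hinj : Function.Injective (N • LinearMap.id : E →ₗ[ℤ] E) := fun x y hxy => by
    simpa [← Int.cast_smul_eq_zsmul ℚ, hN] using hxy
  have hfg : Λ.FG := fg_of_fg_map_injective _ hinj
    (FG.of_le_of_isNoetherian (T := Λ₀) (map_le_iff_le_comap.2 h))
  have htop : span ℚ (Λ : Set E) = ⊤ := by
    refine eq_top_iff.2 (IsLattice.span_eq_top (A := ℚ) (M := Λ₀) ▸ span_le.2 fun x hx => ?_)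
    have hx' : (N : ℚ)⁻¹ • (N • x) = x := by
      rw [← Int.cast_smul_eq_zsmul ℚ, inv_smul_smul₀ (Int.cast_ne_zero.2 hN)]
    exact hx' ▸ smul_mem _ _ (subset_span (h₀ x hx))
  have : Λ.IsLattice ℚ := ⟨hfg, htop⟩
  exact IsZLatticeIn.of_isLattice Λ

end Global

section Surjectivity

variable {E : Type*} [AddCommGroup E] [Module ℚ E]

def globalLattice (M : LocalLatticeFamily E) : Submodule ℤ E where
  carrier := globalPart E M
  add_mem' {x y} hx hy := Set.mem_iInter.2 fun p => by
    simpa only [Set.mem_preimage, SetLike.mem_coe, toLocal_add] using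
      add_mem (Set.mem_iInter.1 hx p) (Set.mem_iInter.1 hy p)
  zero_mem' := Set.mem_iInter.2 fun p => by simp [toLocal]
  smul_mem' n x hx := Set.mem_iInter.2 fun p => by
    simpa only [Set.mem_preimage, SetLike.mem_coe, toLocal_zsmul] using
      zsmul_mem (Set.mem_iInter.1 hx p) n

theorem mem_globalLattice {M : LocalLatticeFamily E} {x : E} :
    x ∈ globalLattice M ↔ ∀ p : Nat.Primes, toLocal E p x ∈ M p :=
  Set.mem_iInter

theorem adelicOf_apply (Λ : Submodule ℤ E) (p : Nat.Primes) :
    adelicOf E Λ p = localizeLat E p Λ :=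
  rfl

theorem IsAdelicLattice.exists_zsmul_sandwich {Λ₀ : Submodule ℤ E} (hΛ₀ : IsZLatticeIn E Λ₀)
    {M : LocalLatticeFamily E} (hM : IsAdelicLattice E Λ₀ M) :
    ∃ N : ℤ, N ≠ 0 ∧ ∀ p : Nat.Primes,
      (∀ z ∈ adelicOf E Λ₀ p, N • z ∈ M p) ∧ ∀ z ∈ M p, N • z ∈ adelicOf E Λ₀ p := by
  have hlocal : ∀ p : Nat.Primes, ∃ n : ℤ, n ≠ 0 ∧
      (∀ z ∈ adelicOf E Λ₀ p, n • z ∈ M p) ∧ ∀ z ∈ M p, n • z ∈ adelicOf E Λ₀ p := by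
    intro p
    obtain ⟨d₀, hd₀⟩ := hΛ₀.isZpLattice_localizeLat p
    obtain ⟨d, hd⟩ := hM.1 p
    obtain ⟨k, hk⟩ := exists_pow_zsmul_mem_span_basis d₀ d
    obtain ⟨k', hk'⟩ := exists_pow_zsmul_mem_span_basis d d₀
    rw [adelicOf_apply, hd₀, hd]
    exact ⟨p ^ k * p ^ k', by simp [p.2.ne_zero], zsmul_mem_of_dvd hk (dvd_mul_right _ _),
      zsmul_mem_of_dvd hk' (dvd_mul_left _ _)⟩
  choose n hn₀ hn using hlocal
  obtain ⟨S, hS⟩ := hM.2.exists_finset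
  refine ⟨∏ p ∈ S, n p, Finset.prod_ne_zero_iff.2 fun p _ => hn₀ p, fun p => ?_⟩
  by_cases hp : p ∈ S
  · exact ⟨zsmul_mem_of_dvd (hn p).1 (Finset.dvd_prod_of_mem n hp),
      zsmul_mem_of_dvd (hn p).2 (Finset.dvd_prod_of_mem n hp)⟩
  · have hMp : M p = adelicOf E Λ₀ p := not_not.1 fun hne => hp ((hS p).2 hne)
    rw [hMp]
    exact ⟨fun z hz => zsmul_mem hz _, fun z hz => zsmul_mem hz _⟩

theorem exists_toLocal_eq_add_zsmul {ι : Type*} [Fintype ι] (c : Basis ι ℚ E) (p : ℕ)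
    [Fact p.Prime] (y : ℚ_[p] ⊗[ℚ] E) {N : ℤ} (hN : N ≠ 0) :
    ∃ k : ℕ, ∃ u ∈ span ℤ (Set.range c), ∃ z ∈ localizeLat E p (span ℤ (Set.range c)),
      toLocal E p ((p ^ k : ℚ)⁻¹ • (N : ℚ) • u) = y + N • z := by
  have hN' : (N : ℚ_[p]) ≠ 0 := Int.cast_ne_zero.2 hN
  obtain ⟨k, hk⟩ := (eventually_all.2 fun i =>
    Padic.eventually_exists_int_approx hN' ((c.baseChange ℚ_[p]).repr y i)).exists
  choose n hn using hk
  set u := ∑ i, n i • c i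
  refine ⟨k, u, sum_mem fun i _ => zsmul_mem (subset_span (Set.mem_range_self i)) _,
    (N : ℚ_[p])⁻¹ • (toLocal E p ((p ^ k : ℚ)⁻¹ • (N : ℚ) • u) - y), ?_, ?_⟩
  · rw [mem_localizeLat_span_basis_iff]
    intro i
    have hu : c.repr u i = n i := by
      classical simp [u, Finsupp.finsetSum_apply, Finsupp.single_apply]
    simp only [map_smul, map_sub, Finsupp.smul_apply, Finsupp.sub_apply, smul_eq_mul,
      Basis.baseChange_repr_toLocal, hu, norm_mul, norm_inv]
    push_cast
    exact inv_mul_le_one_of_le₀ (hn i) (norm_nonneg _)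
  · rw [← Int.cast_smul_eq_zsmul ℚ_[p] N (_ • _), smul_inv_smul₀ hN', add_sub_cancel]

theorem localizeLat_globalLattice {Λ₀ : Submodule ℤ E} (hΛ₀ : IsZLatticeIn E Λ₀)
    {M : LocalLatticeFamily E} {N : ℤ} (hN : N ≠ 0)
    (hM : ∀ p : Nat.Primes, ∀ z ∈ adelicOf E Λ₀ p, N • z ∈ M p) (p : Nat.Primes) :
    localizeLat E p (globalLattice M) = M p := by
  refine le_antisymm ((localizeLat_le_iff p).2 fun x hx => mem_globalLattice.1 hx p) fun y hy => ?_
  have hΛ₀M : ∀ x ∈ Λ₀, N • x ∈ globalLattice M := fun x hx =>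
    mem_globalLattice.2 fun q => toLocal_zsmul q N x ▸ hM q _ (toLocal_mem_localizeLat q hx)
  obtain ⟨c, rfl⟩ := hΛ₀
  obtain ⟨k, u, hu, z, hz, hxyz⟩ := exists_toLocal_eq_add_zsmul c p y hN
  have hx : (p ^ k : ℚ)⁻¹ • (N : ℚ) • u ∈ globalLattice M := by
    refine mem_globalLattice.2 fun q => ?_
    by_cases hq : q = p
    · subst hq
      rw [hxyz]
      exact add_mem hy (hM q z hz)
    · rw [Int.cast_smul_eq_zsmul, toLocal_ratSMul, toLocal_zsmul]
      refine smul_mem_of_norm_le_one _ (le_of_eq ?_) (hM q _ (toLocal_mem_localizeLat q hu))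
      have hqp : (q : ℕ).Coprime p := (Nat.coprime_primes q.2 p.2).2 fun h => hq (Subtype.ext h)
      simp [Padic.norm_natCast_eq_one_iff.2 hqp]
  have hy : y = toLocal E p ((p ^ k : ℚ)⁻¹ • (N : ℚ) • u) - N • z := by
    rw [hxyz, add_sub_cancel_right]
  rw [hy]
  exact sub_mem (toLocal_mem_localizeLat p hx) (zsmul_mem_localizeLat p hΛ₀M z hz)

theorem IsAdelicLattice.isZLatticeIn_globalLattice {Λ₀ : Submodule ℤ E}
    (hΛ₀ : IsZLatticeIn E Λ₀) {M : LocalLatticeFamily E} (hM : IsAdelicLattice E Λ₀ M) :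
    IsZLatticeIn E (globalLattice M) := by
  obtain ⟨N, hN, hsandwich⟩ := hM.exists_zsmul_sandwich hΛ₀
  refine hΛ₀.of_zsmul_mem hN (fun x hx => mem_globalLattice.2 fun p => ?_)
    (fun x hx => hΛ₀.mem_iff_forall_toLocal_mem.2 fun p => ?_)
  · rw [toLocal_zsmul]
    exact (hsandwich p).1 _ (toLocal_mem_localizeLat p hx)
  · rw [toLocal_zsmul]
    exact (hsandwich p).2 _ (mem_globalLattice.1 hx p)

theorem IsAdelicLattice.adelicOf_globalLattice {Λ₀ : Submodule ℤ E} (hΛ₀ : IsZLatticeIn E Λ₀)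
    {M : LocalLatticeFamily E} (hM : IsAdelicLattice E Λ₀ M) :
    adelicOf E (globalLattice M) = M := by
  obtain ⟨N, hN, hsandwich⟩ := hM.exists_zsmul_sandwich hΛ₀
  exact funext (localizeLat_globalLattice hΛ₀ hN fun p => (hsandwich p).1)

end Surjectivity

/-- Local-global principle for lattices: `Λ ↦ Λ ⊗ Ẑ` is a bijection between
lattices in `V` and lattices in `V ⊗ 𝔸_f` (relative to a fixed integral model
`Λ₀`), and its inverse is intersection with `V`. -/
theorem lattice_localGlobal (Λ₀ : Submodule ℤ V) (hΛ₀ : IsZLatticeIn V Λ₀) :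
    Set.BijOn (adelicOf V) {Λ : Submodule ℤ V | IsZLatticeIn V Λ}
        {M : LocalLatticeFamily V | IsAdelicLattice V Λ₀ M} ∧
      ∀ Λ : Submodule ℤ V, IsZLatticeIn V Λ →
        (Λ : Set V) = globalPart V (adelicOf V Λ) := by
  refine ⟨⟨fun Λ hΛ => hΛ.isAdelicLattice hΛ₀, fun Λ₁ hΛ₁ Λ₂ hΛ₂ h => ?_,
    fun M hM => ⟨globalLattice M, hM.isZLatticeIn_globalLattice hΛ₀,
      hM.adelicOf_globalLattice hΛ₀⟩⟩, fun Λ hΛ => hΛ.coe_eq_globalPart⟩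
  exact SetLike.coe_injective (by rw [hΛ₁.coe_eq_globalPart, hΛ₂.coe_eq_globalPart, h])
end

section
/- Let L be a field, let E ∈ L[J_1,…,J_n][J_{n+1}] have degree e ≥ 1 in J_{n+1} and total degree d_E in J_1,…,J_n, with leading coefficient E_e ∈ L[J_1,…,J_n]. Let P, Q ∈ L[J_1,…,J_{n+1}] have total degree at most d, with Q invertible modulo E in L(J_1,…,J_n)[J_{n+1}]/(E). Then there is a representative R ∈ L(J_1,…,J_n)[J_{n+1}] of P/Q modulo E with deg_{J_{n+1}}(R) ≤ e−1 and total degree in J_1,…,J_n bounded by (e + 2 d_E)·d. -/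
set_option synthInstance.maxHeartbeats 1000000
set_option maxHeartbeats 1000000

noncomputable section

variable {L : Type*} [Field L] {n : ℕ}

/-- The total degree (in all of `J_1, …, J_{n+1}`) of an element of
`L[J_1,…,J_n][J_{n+1}]`. -/
def totalDeg (F : Polynomial (MvPolynomial (Fin n) L)) : ℕ :=
  F.support.sup fun k => k + (F.coeff k).totalDegree

/-- The canonical map `L[J_1,…,J_n][J_{n+1}] → L(J_1,…,J_n)[J_{n+1}]`. -/
def toFrac (n : ℕ) (L : Type*) [Field L] :
    Polynomial (MvPolynomial (Fin n) L) →+*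
      Polynomial (FractionRing (MvPolynomial (Fin n) L)) :=
  Polynomial.mapRingHom
    (algebraMap (MvPolynomial (Fin n) L) (FractionRing (MvPolynomial (Fin n) L)))

noncomputable section AuxCFDB
open Polynomial

variable {T : Type*} [CommRing T]

/-- Sylvester-type matrix -/
def sylvCFDB (Qp Ep : T[X]) (e m : ℕ) : Matrix (Fin m) (Fin m) T := fun i j =>
  if (j : ℕ) < e then (if (j : ℕ) ≤ (i : ℕ) then Qp.coeff ((i : ℕ) - j) else 0)
  else (if ((j : ℕ) - e) ≤ (i : ℕ) then Ep.coeff ((i : ℕ) - ((j : ℕ) - e)) else 0)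

def npolyCFDB (e : ℕ) {m : ℕ} (y : Fin m → T) : T[X] :=
  ∑ j : Fin m, if (j : ℕ) < e then Polynomial.monomial (j : ℕ) (y j) else 0

def spolyCFDB (e : ℕ) {m : ℕ} (y : Fin m → T) : T[X] :=
  ∑ j : Fin m, if (j : ℕ) < e then 0 else Polynomial.monomial ((j : ℕ) - e) (y j)

theorem coeff_monomial_mul_CFDB (a : ℕ) (c : T) (p : T[X]) (i : ℕ) :
    (Polynomial.monomial a c * p).coeff i = if a ≤ i then c * p.coeff (i - a) else 0 := by
  have h : Polynomial.monomial a c * p = Polynomial.C c * (p * X ^ a) := by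
    rw [← C_mul_X_pow_eq_monomial]; ring
  rw [h, coeff_C_mul, coeff_mul_X_pow']
  split <;> simp

theorem coeff_comb_CFDB (Qp Ep : T[X]) (e : ℕ) {m : ℕ} (y : Fin m → T) (i : Fin m) :
    (npolyCFDB e y * Qp + spolyCFDB e y * Ep).coeff (i : ℕ) =
      (sylvCFDB Qp Ep e m).mulVec y i := by
  rw [Matrix.mulVec, dotProduct, npolyCFDB, spolyCFDB, Finset.sum_mul, Finset.sum_mul,
    coeff_add, finset_sum_coeff, finset_sum_coeff, ← Finset.sum_add_distrib]
  refine Finset.sum_congr rfl fun j _ => ?_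
  by_cases hj : (j : ℕ) < e <;>
    simp only [sylvCFDB, hj, if_true, if_false, ite_mul, zero_mul, coeff_zero, add_zero,
      zero_add, coeff_monomial_mul_CFDB] <;> split <;> simp [mul_comm]

theorem npoly_coeff_eq_CFDB {e m : ℕ} (y : Fin m → T) (j : Fin m) (hj : (j : ℕ) < e) :
    (npolyCFDB e y).coeff (j : ℕ) = y j := by
  rw [npolyCFDB, finset_sum_coeff, Finset.sum_eq_single j]
  · simp [hj, coeff_monomial]
  · intro b _ hb
    by_cases hbe : (b : ℕ) < e
    · simp only [hbe, if_true, coeff_monomial]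
      have : (b : ℕ) ≠ (j : ℕ) := fun h => hb (Fin.ext h)
      simp [this]
    · simp [hbe]
  · simp

theorem npoly_coeff_ge_CFDB {e m : ℕ} (y : Fin m → T) (k : ℕ) (hk : e ≤ k) :
    (npolyCFDB e y).coeff k = 0 := by
  rw [npolyCFDB, finset_sum_coeff]
  refine Finset.sum_eq_zero fun j _ => ?_
  by_cases hj : (j : ℕ) < e
  · simp only [hj, if_true, coeff_monomial]
    have : (j : ℕ) ≠ k := by omega
    simp [this]
  · simp [hj]

theorem spoly_coeff_eq_CFDB {e m : ℕ} (y : Fin m → T) (j : Fin m) (hj : e ≤ (j : ℕ)) :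
    (spolyCFDB e y).coeff ((j : ℕ) - e) = y j := by
  rw [spolyCFDB, finset_sum_coeff, Finset.sum_eq_single j]
  · simp [Nat.not_lt.mpr hj, coeff_monomial]
  · intro b _ hb
    by_cases hbe : (b : ℕ) < e
    · simp [hbe]
    · simp only [hbe, if_false, coeff_monomial]
      have : (b : ℕ) - e ≠ (j : ℕ) - e := by
        intro h; exact hb (Fin.ext (by omega))
      simp [this]
  · simp

theorem npoly_natDegree_le_CFDB (e : ℕ) (he : 1 ≤ e) {m : ℕ} (y : Fin m → T) :
    (npolyCFDB e y).natDegree ≤ e - 1 := by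
  refine natDegree_sum_le_of_forall_le _ _ fun j _ => ?_
  split
  · exact (natDegree_monomial_le _).trans (by omega)
  · simp

theorem spoly_natDegree_le_CFDB (e : ℕ) {m : ℕ} (y : Fin m → T) :
    (spolyCFDB e y).natDegree ≤ m - e - 1 := by
  refine natDegree_sum_le_of_forall_le _ _ fun j _ => ?_
  split
  · simp
  · refine (natDegree_monomial_le _).trans ?_
    have := j.2; omega

theorem spoly_eq_zero_CFDB (e : ℕ) {m : ℕ} (hm : m ≤ e) (y : Fin m → T) :
    spolyCFDB e y = 0 := by
  rw [spolyCFDB]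
  refine Finset.sum_eq_zero fun j _ => ?_
  have : (j : ℕ) < e := lt_of_lt_of_le j.2 hm
  simp [this]

theorem coeff_comb_zero_CFDB (Qp Ep : T[X]) {e d : ℕ} (he : 1 ≤ e)
    (hQ : Qp.natDegree ≤ d) (hE : Ep.natDegree ≤ e) (y : Fin (e + d) → T) (i : ℕ)
    (hi : e + d ≤ i) :
    (npolyCFDB e y * Qp + spolyCFDB e y * Ep).coeff i = 0 := by
  have h1 : (npolyCFDB e y * Qp).coeff i = 0 := by
    refine coeff_eq_zero_of_natDegree_lt (lt_of_le_of_lt (natDegree_mul_le.trans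
      (add_le_add (npoly_natDegree_le_CFDB e he y) hQ)) (by omega))
  rcases Nat.eq_zero_or_pos d with hd | hd
  · rw [spoly_eq_zero_CFDB e (by omega) y]
    simp [h1]
  · have h2 : (spolyCFDB e y * Ep).coeff i = 0 := by
      refine coeff_eq_zero_of_natDegree_lt (lt_of_le_of_lt (natDegree_mul_le.trans
        (add_le_add (spoly_natDegree_le_CFDB e y) hE)) (by omega))
    simp [h1, h2]

theorem totalDegree_det_CFDB {σ F : Type*} [CommRing F] {m : ℕ}
    (A : Matrix (Fin m) (Fin m) (MvPolynomial σ F)) (c : Fin m → ℕ)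
    (h : ∀ i j, (A i j).totalDegree ≤ c j) :
    A.det.totalDegree ≤ ∑ j, c j := by
  rw [Matrix.det_apply]
  refine (MvPolynomial.totalDegree_finset_sum _ _).trans (Finset.sup_le fun σp _ => ?_)
  have hprod : (∏ i, A (σp i) i).totalDegree ≤ ∑ j, c j :=
    (MvPolynomial.totalDegree_finset_prod _ _).trans
      (Finset.sum_le_sum fun i _ => h (σp i) i)
  rcases Int.units_eq_one_or (Equiv.Perm.sign σp) with hs | hs <;>
    rw [hs]
  · simpa using hprod
  · rw [Units.smul_def]
    simp only [Units.val_neg, Units.val_one, neg_smul, one_smul]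
    rwa [MvPolynomial.totalDegree_neg]

end AuxCFDB

/-- Reduction to canonical form modulo `E`: if `E ∈ L[J_1,…,J_n][J_{n+1}]` has
degree `e ≥ 1` in `J_{n+1}` and total degree `d_E` in `J_1,…,J_n`, and
`P, Q` have total degree at most `d` with `Q` invertible modulo `E`, then the
fraction `P/Q` has a representative `R = N/D` modulo `E` in canonical form,
i.e. of degree at most `e−1` in `J_{n+1}`, whose total degree in `J_1,…,J_n`
(for both the numerator `N` and denominator `D`) is at most `(e + 2·d_E)·d`. -/
theorem canonical_form_degree_bound
    (E : Polynomial (MvPolynomial (Fin n) L)) (e : ℕ) (he : E.natDegree = e)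
    (he1 : 1 ≤ e)
    (dE : ℕ) (hdE : ∀ k, (E.coeff k).totalDegree ≤ dE)
    (P Q : Polynomial (MvPolynomial (Fin n) L)) (d : ℕ)
    (hP : totalDeg P ≤ d) (hQ : totalDeg Q ≤ d)
    (hQunit : IsUnit (Ideal.Quotient.mk (Ideal.span {toFrac n L E})
      (toFrac n L Q))) :
    ∃ (N : Polynomial (MvPolynomial (Fin n) L)) (D : MvPolynomial (Fin n) L),
      D ≠ 0 ∧
      N.natDegree ≤ e - 1 ∧
      (∀ k, (N.coeff k).totalDegree ≤ (e + 2 * dE) * d) ∧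
      D.totalDegree ≤ (e + 2 * dE) * d ∧
      IsUnit (Ideal.Quotient.mk (Ideal.span {toFrac n L E})
        (toFrac n L (Polynomial.C D))) ∧
      Ideal.Quotient.mk (Ideal.span {toFrac n L E}) (toFrac n L P) *
          Ideal.Quotient.mk (Ideal.span {toFrac n L E})
            (toFrac n L (Polynomial.C D)) =
        Ideal.Quotient.mk (Ideal.span {toFrac n L E}) (toFrac n L N) *
          Ideal.Quotient.mk (Ideal.span {toFrac n L E}) (toFrac n L Q) := by
  classical
  obtain ⟨A, hA⟩ : ∃ A, A = sylvCFDB Q E e (e + d) := ⟨_, rfl⟩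
  obtain ⟨b, hb⟩ : ∃ b, b = fun i : Fin (e + d) => P.coeff (i : ℕ) := ⟨_, rfl⟩
  obtain ⟨x, hx⟩ : ∃ x, x = A.cramer b := ⟨_, rfl⟩
  have hφ : Function.Injective (algebraMap (MvPolynomial (Fin n) L)
      (FractionRing (MvPolynomial (Fin n) L))) :=
    IsFractionRing.injective _ _
  have htf : ∀ F : Polynomial (MvPolynomial (Fin n) L),
      toFrac n L F = F.map (algebraMap (MvPolynomial (Fin n) L)
        (FractionRing (MvPolynomial (Fin n) L))) := fun F => rfl
  -- coefficient total-degree bounds from totalDeg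
  have hcoeff : ∀ (F : Polynomial (MvPolynomial (Fin n) L)) (df : ℕ), totalDeg F ≤ df →
      ∀ k, (F.coeff k).totalDegree ≤ df := by
    intro F df hF k
    by_cases h : k ∈ F.support
    · exact le_trans (le_trans (Nat.le_add_left _ k)
        (Finset.le_sup (f := fun k => k + (F.coeff k).totalDegree) h)) hF
    · simp [Polynomial.notMem_support_iff.mp h]
  have hnatDeg : ∀ (F : Polynomial (MvPolynomial (Fin n) L)) (df : ℕ),
      totalDeg F ≤ df → F.natDegree ≤ df := by
    intro F df hF
    by_cases hF0 : F = 0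
    · simp [hF0]
    · have hmem : F.natDegree ∈ F.support := Polynomial.natDegree_mem_support_of_nonzero hF0
      exact le_trans (le_trans (Nat.le_add_right _ _)
        (Finset.le_sup (f := fun k => k + (F.coeff k).totalDegree) hmem)) hF
  have hQc := hcoeff Q d hQ
  have hPc := hcoeff P d hP
  have hQd := hnatDeg Q d hQ
  have hPd := hnatDeg P d hP
  -- entry bounds for A
  have hAent : ∀ (i j : Fin (e + d)), (A i j).totalDegree ≤ if (j : ℕ) < e then d else dE := by
    intro i j
    rw [hA, sylvCFDB]
    by_cases hj : (j : ℕ) < e <;> simp only [hj, if_true, if_false] <;> split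
    · exact hQc _
    · simp
    · exact hdE _
    · simp
  have hsum : (∑ j : Fin (e + d), if (j : ℕ) < e then d else dE) ≤ (e + 2 * dE) * d := by
    rw [Fin.sum_univ_eq_sum_range (fun j => if j < e then d else dE) (e + d)]
    have hfil : Finset.filter (fun j => j < e) (Finset.range (e + d)) = Finset.range e := by
      ext j; simp; omega
    rw [Finset.sum_ite, Finset.sum_const, Finset.sum_const, hfil]
    have hcard : (Finset.filter (fun j => ¬j < e) (Finset.range (e + d))).card = d := by
      have h0 := Finset.card_filter_add_card_filter_not
        (s := Finset.range (e + d)) (p := fun j => j < e)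
      rw [hfil] at h0
      simp only [Finset.card_range] at h0 ⊢
      omega
    rw [hcard, Finset.card_range, smul_eq_mul, smul_eq_mul]
    have h1 : d * dE ≤ 2 * dE * d := by
      rw [mul_comm d dE, mul_assoc]
      exact Nat.le_mul_of_pos_left _ (by norm_num)
    calc e * d + d * dE ≤ e * d + 2 * dE * d := by omega
      _ = (e + 2 * dE) * d := by ring
  -- key identity
  have key : npolyCFDB e x * Q + spolyCFDB e x * E = Polynomial.C A.det * P := by
    refine Polynomial.ext fun i => ?_
    rcases lt_or_ge i (e + d) with hi | hi
    · rw [coeff_comb_CFDB Q E e x ⟨i, hi⟩, ← hA, hx, Matrix.mulVec_cramer A b,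
        Pi.smul_apply, smul_eq_mul, Polynomial.coeff_C_mul, hb]
    · rw [coeff_comb_zero_CFDB Q E he1 hQd he.le x i hi, Polynomial.coeff_C_mul,
        Polynomial.coeff_eq_zero_of_natDegree_lt (lt_of_le_of_lt hPd (by omega)), mul_zero]
  have hE0 : E ≠ 0 := by
    intro h; rw [h, Polynomial.natDegree_zero] at he; omega
  -- nonvanishing of the determinant
  have hDne : A.det ≠ 0 := by
    intro h0
    obtain ⟨v, hv, hAv⟩ := Matrix.exists_mulVec_eq_zero_iff.mpr h0
    have hz : npolyCFDB e v * Q + spolyCFDB e v * E = 0 := by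
      refine Polynomial.ext fun i => ?_
      rcases lt_or_ge i (e + d) with hi | hi
      · rw [coeff_comb_CFDB Q E e v ⟨i, hi⟩, ← hA, hAv]
        simp
      · rw [coeff_comb_zero_CFDB Q E he1 hQd he.le v i hi, Polynomial.coeff_zero]
    set φ := algebraMap (MvPolynomial (Fin n) L) (FractionRing (MvPolynomial (Fin n) L))
    have hzK : (npolyCFDB e v).map φ * Q.map φ + (spolyCFDB e v).map φ * E.map φ = 0 := by
      have h1 := congrArg (Polynomial.map φ) hz
      simpa [Polynomial.map_add, Polynomial.map_mul] using h1
    -- coprimality of Q and E over the fraction field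
    have hcop : IsCoprime (Q.map φ) (E.map φ) := by
      obtain ⟨u, hu⟩ := hQunit
      obtain ⟨c, hc⟩ := Ideal.Quotient.mk_surjective (I := Ideal.span {toFrac n L E})
        ((u⁻¹ : _) : _)
      have h1 : Ideal.Quotient.mk (Ideal.span {toFrac n L E}) (toFrac n L Q * c - 1) = 0 := by
        rw [map_sub, map_mul, map_one, hc, ← hu, Units.mul_inv, sub_self]
      have h2 : toFrac n L Q * c - 1 ∈ Ideal.span {toFrac n L E} :=
        Ideal.Quotient.eq_zero_iff_mem.mp h1
      obtain ⟨t, ht⟩ := Ideal.mem_span_singleton'.mp h2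
      rw [htf, htf] at ht
      exact ⟨c, -t, by linear_combination -ht⟩
    have hEdeg : (E.map φ).natDegree = e := by
      rw [Polynomial.natDegree_map_eq_of_injective hφ, he]
    obtain ⟨a, b2, hab⟩ := hcop
    have hdvd : (E.map φ) ∣ (npolyCFDB e v).map φ :=
      ⟨b2 * (npolyCFDB e v).map φ - a * (spolyCFDB e v).map φ, by
        linear_combination ((npolyCFDB e v).map φ) * hab.symm + a * hzK⟩
    have hN0 : (npolyCFDB e v).map φ = 0 := by
      by_contra h
      have h1 := Polynomial.natDegree_le_of_dvd hdvd h
      have h2 : ((npolyCFDB e v).map φ).natDegree ≤ e - 1 :=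
        Polynomial.natDegree_map_le.trans (npoly_natDegree_le_CFDB e he1 v)
      omega
    have hNR : npolyCFDB e v = 0 :=
      Polynomial.map_injective φ hφ (by rw [hN0, Polynomial.map_zero])
    have hSR : spolyCFDB e v = 0 := by
      rw [hNR, zero_mul, zero_add] at hz
      exact (mul_eq_zero.mp hz).resolve_right hE0
    apply hv
    funext j
    by_cases hj : (j : ℕ) < e
    · have h1 := npoly_coeff_eq_CFDB v j hj
      rw [hNR] at h1; simpa using h1.symm
    · have h1 := spoly_coeff_eq_CFDB v j (le_of_not_gt hj)
      rw [hSR] at h1; simpa using h1.symm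
  have hφD : algebraMap (MvPolynomial (Fin n) L) (FractionRing (MvPolynomial (Fin n) L))
      A.det ≠ 0 := fun h => hDne (hφ (h.trans (map_zero _).symm))
  refine ⟨npolyCFDB e x, A.det, hDne, npoly_natDegree_le_CFDB e he1 x, ?_, ?_, ?_, ?_⟩
  · -- coefficient bounds of N
    intro k
    by_cases hk : k < e
    · have hk' : k < e + d := by omega
      rw [npoly_coeff_eq_CFDB x ⟨k, hk'⟩ hk, hx, Matrix.cramer_apply]
      refine le_trans (totalDegree_det_CFDB _ (fun j => if (j : ℕ) < e then d else dE) ?_) hsum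
      intro i j
      rw [Matrix.updateCol_apply]
      by_cases hji : j = ⟨k, hk'⟩
      · subst hji
        rw [if_pos rfl, hb]
        simpa [hk] using hPc (i : ℕ)
      · rw [if_neg hji]
        exact hAent i j
    · rw [npoly_coeff_ge_CFDB x k (le_of_not_gt hk)]
      simp
  · exact le_trans (totalDegree_det_CFDB A (fun j => if (j : ℕ) < e then d else dE) hAent) hsum
  · -- C D is a unit modulo E
    have h1 : toFrac n L (Polynomial.C A.det) = Polynomial.C
        (algebraMap (MvPolynomial (Fin n) L) (FractionRing (MvPolynomial (Fin n) L)) A.det) := by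
      rw [htf, Polynomial.map_C]
    rw [h1]
    exact (Polynomial.isUnit_C.mpr (isUnit_iff_ne_zero.mpr hφD)).map _
  · -- the congruence
    rw [← map_mul, ← map_mul, ← map_mul, ← map_mul, Ideal.Quotient.eq, ← map_sub]
    have hsub : P * Polynomial.C A.det - npolyCFDB e x * Q = spolyCFDB e x * E := by
      linear_combination -key
    rw [hsub, map_mul]
    exact Ideal.mem_span_singleton.mpr ⟨toFrac n L (spolyCFDB e x), mul_comm _ _⟩

end
end

section
/- Let L be a number field and P ∈ L[Y] of degree at most d ≥ 1. Let y_1,…,y_N be distinct integers in an interval [A,B] ⊂ ℤ with N ≥ d+1, let D = B−A and M = max{|A|,|B|}, and suppose h(P(y_i)) ≤ H for all i. Then h(P) ≤ (N/(N−d))·H + D·log D + d·log(2M) + log(d+1). -/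
/-
Fix a place `v`. Among the `N` nodes choose the `d + 1` at which `log⁺ |P(y_i)|_v` is smallest;
each of these values is then at most `(N - d)⁻¹ ∑_i log⁺ |P(y_i)|_v`. Lagrange interpolation on
these nodes writes every coefficient of `P` as a sum of `P(z) · c / ∏_{w ≠ z} (z - w)` with `c`
a coefficient of `∏_{w ≠ z} (X - w) ∈ ℤ[X]`, so `|c|_v ≤ (1 + M)^d`, or `≤ 1` at nonarchimedean
places, where also the factor `d + 1` from the number of summands disappears. The denominators
divide `D!`, and since `|·|_v` is either `≤ 1` on all of `ℤ` or `≥ 1` on all of `ℤ ∖ {0}`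
(Ostrowski), `|∏ (z - w)|_v⁻¹ ≤ max 1 |1/D!|_v`. Summing the resulting local bounds with the
weights of the places, the product formula gives `h(1/D!) = h(D!) ≤ log D! ≤ D log D`.
-/

open Real Finset Polynomial
open scoped Nat

theorem exists_card_eq_forall_mul_le_sum {ι : Type*} [Fintype ι] {d : ℕ}
    (hd : d + 1 ≤ Fintype.card ι) {g : ι → ℝ} (hg : ∀ i, 0 ≤ g i) :
    ∃ S : Finset ι, S.card = d + 1 ∧ ∀ i ∈ S, ((Fintype.card ι : ℝ) - d) * g i ≤ ∑ j, g j := by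
  classical
  obtain ⟨S, hS, hmin⟩ := exists_min_image ((univ : Finset ι).powersetCard (d + 1))
    (fun S => ∑ i ∈ S, g i) (powersetCard_nonempty.mpr (by simpa using hd))
  have hcard : S.card = d + 1 := (mem_powersetCard.mp hS).2
  refine ⟨S, hcard, fun i hi => ?_⟩
  -- exchanging `i` for an outside `j` cannot decrease the sum over `S`
  have hout : ∀ j ∈ Sᶜ, g i ≤ g j := fun j hj => by
    have hj : j ∉ S.erase i := fun h => (mem_compl.mp hj) (mem_of_mem_erase h)
    have := hmin (insert j (S.erase i)) (mem_powersetCard.mpr ⟨subset_univ _, by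
      rw [card_insert_of_notMem hj, card_erase_of_mem hi, hcard]; omega⟩)
    rw [sum_insert hj, ← add_sum_erase S g hi] at this
    linarith
  have hcompl : ((Sᶜ.card : ℕ) : ℝ) = Fintype.card ι - (d + 1) := by
    rw [card_compl, hcard, Nat.cast_sub hd]; push_cast; ring
  have h1 := card_nsmul_le_sum Sᶜ g (g i) hout
  rw [nsmul_eq_mul, hcompl] at h1
  have h2 := single_le_sum (fun j _ => hg j) hi
  rw [← sum_add_sum_compl S g]
  linarith

theorem log_max_one_iSup_le_of_forall_subset {ι : Type*} [Fintype ι] {d : ℕ}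
    (hd : d + 1 ≤ Fintype.card ι) {a : ℕ → ℝ} {b : ι → ℝ} {C W : ℝ} (hC : 1 ≤ C)
    (hW : 1 ≤ W)
    (h : ∀ S : Finset ι, S.card = d + 1 → ∀ E, (∀ i ∈ S, b i ≤ E) → ∀ k, a k ≤ C * (E * W)) :
    log (max 1 (⨆ k, a k)) ≤
      log C + ((Fintype.card ι : ℝ) - d)⁻¹ * ∑ i, log (max 1 (b i)) + log W := by
  set R := ((Fintype.card ι : ℝ) - d)⁻¹ * ∑ i, log (max 1 (b i))
  have hpos : (0 : ℝ) < Fintype.card ι - d := by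
    have : (d : ℝ) + 1 ≤ Fintype.card ι := by exact_mod_cast hd
    linarith
  have hR : 0 ≤ R := mul_nonneg (inv_nonneg.mpr hpos.le)
    (sum_nonneg fun i _ => log_nonneg (le_max_left _ _))
  obtain ⟨S, hS, hSR⟩ := exists_card_eq_forall_mul_le_sum hd (g := fun i => log (max 1 (b i)))
    fun i => log_nonneg (le_max_left _ _)
  have hbS : ∀ i ∈ S, b i ≤ exp R := fun i hi => by
    refine (le_max_right 1 (b i)).trans ?_
    rw [← exp_log (by positivity : 0 < max 1 (b i)), exp_le_exp, le_inv_mul_iff₀ hpos]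
    exact hSR i hi
  have hbound : max 1 (⨆ k, a k) ≤ C * (exp R * W) :=
    max_le (one_le_mul_of_one_le_of_one_le hC (one_le_mul_of_one_le_of_one_le
      (one_le_exp hR) hW)) (ciSup_le (h S hS _ hbS))
  calc log (max 1 (⨆ k, a k)) ≤ log (C * (exp R * W)) := log_le_log (by positivity) hbound
    _ = log C + R + log W := by
      rw [log_mul (by positivity) (by positivity), log_mul (by positivity) (by positivity),
        log_exp, add_assoc]

theorem Real.log_factorial_le_mul_log (n : ℕ) : log (n ! : ℝ) ≤ n * log n := by
  rw [← log_pow]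
  exact log_le_log (by positivity) (by exact_mod_cast Nat.factorial_le_pow n)

theorem log_mul_one_add_pow_le {d : ℕ} {M : ℝ} (hM0 : 0 ≤ M) (hM : 0 < d → 1 ≤ M) :
    log ((d + 1) * (1 + M) ^ d) ≤ log ((d : ℝ) + 1) + d * log (2 * M) := by
  rw [log_mul (by positivity) (by positivity), log_pow]
  rcases d.eq_zero_or_pos with rfl | hd
  · simp
  have := hM hd
  gcongr
  linarith

theorem one_le_max_abs_abs {A B a b : ℤ} (ha : a ∈ Set.Icc A B) (hb : b ∈ Set.Icc A B)
    (hab : a ≠ b) : 1 ≤ max |A| |B| := by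
  rw [Set.mem_Icc] at ha hb
  obtain hA | hB : A ≠ 0 ∨ B ≠ 0 := by omega
  · exact le_max_of_le_left (Int.one_le_abs hA)
  · exact le_max_of_le_right (Int.one_le_abs hB)

theorem Finset.prod_dvd_factorial {ι : Type*} {t : Finset ι} {g : ι → ℕ} {n : ℕ}
    (hg : Set.InjOn g t) (hmem : ∀ i ∈ t, 0 < g i ∧ g i ≤ n) : ∏ i ∈ t, g i ∣ n ! := by
  classical
  rw [← prod_Ico_id_eq_factorial, ← prod_image (f := fun j => j) hg]
  refine prod_dvd_prod_of_subset _ _ _ fun j hj => ?_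
  obtain ⟨i, hi, rfl⟩ := mem_image.mp hj
  have := hmem i hi
  simp only [mem_Ico]
  omega

def lagrangeDen (s : Finset ℤ) (z : ℤ) : ℤ := ∏ w ∈ s.erase z, (z - w)

noncomputable def lagrangeNum (s : Finset ℤ) (z : ℤ) : ℤ[X] := ∏ w ∈ s.erase z, (X - C w)

theorem lagrangeDen_dvd_factorial {s : Finset ℤ} {A B z : ℤ} (hs : s ⊆ Icc A B) (hz : z ∈ s) :
    lagrangeDen s z ∣ ((B - A).toNat ! : ℤ) := by
  have hAB : ∀ w ∈ s.erase z, A ≤ w ∧ w ≤ B ∧ w ≠ z := fun w hw =>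
    have := mem_Icc.mp (hs (mem_of_mem_erase hw)); ⟨this.1, this.2, ne_of_mem_erase hw⟩
  have hzAB := mem_Icc.mp (hs hz)
  have hbelow : ∏ w ∈ (s.erase z).filter (· < z), (z - w).natAbs ∣ (z - A).toNat ! :=
    prod_dvd_factorial (fun w hw w' hw' h => by
        simp only [coe_filter, Set.mem_ofPred_eq] at hw hw'; omega)
      fun w hw => by have := hAB w (mem_filter.mp hw).1; simp only [mem_filter] at hw; omega
  have habove : ∏ w ∈ (s.erase z).filter (¬ · < z), (z - w).natAbs ∣ (B - z).toNat ! :=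
    prod_dvd_factorial (fun w hw w' hw' h => by
        simp only [coe_filter, Set.mem_ofPred_eq] at hw hw'; omega)
      fun w hw => by have := hAB w (mem_filter.mp hw).1; simp only [mem_filter] at hw; omega
  have hprod : ∏ w ∈ s.erase z, (z - w).natAbs ∣ (B - A).toNat ! := by
    rw [← prod_filter_mul_prod_filter_not _ (· < z),
      show (B - A).toNat = (z - A).toNat + (B - z).toNat by omega]
    exact (mul_dvd_mul hbelow habove).trans (Nat.factorial_mul_factorial_dvd_factorial_add _ _)
  rw [lagrangeDen, ← abs_dvd, abs_prod]
  simp_rw [← Int.natCast_natAbs]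
  exact_mod_cast hprod

theorem map_lagrangeNum {L : Type*} [Field L] (s : Finset ℤ) (z : ℤ) :
    (lagrangeNum s z).map (Int.castRingHom L) = ∏ w ∈ s.erase z, (X - C (w : L)) := by
  simp [lagrangeNum, Polynomial.map_prod]

theorem lagrange_basis_intCast {L : Type*} [Field L] (s : Finset ℤ) (z : ℤ) :
    Lagrange.basis s (Int.cast : ℤ → L) z =
      C ((lagrangeDen s z : L)⁻¹) * (lagrangeNum s z).map (Int.castRingHom L) := by
  simp [Lagrange.basis, Lagrange.basisDivisor, lagrangeDen, map_lagrangeNum, prod_mul_distrib,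
    ← map_prod C, prod_inv_distrib]

theorem coeff_eq_sum_lagrange {L : Type*} [Field L] [CharZero L] {P : L[X]} {s : Finset ℤ}
    (hP : P.natDegree < s.card) (k : ℕ) :
    P.coeff k =
      ∑ z ∈ s, P.eval (z : L) * ((lagrangeDen s z : L)⁻¹ * ((lagrangeNum s z).coeff k : L)) := by
  conv_lhs => rw [Lagrange.eq_interpolate (f := P) Int.cast_injective.injOn
    (degree_le_natDegree.trans_lt (by exact_mod_cast hP))]
  simp [Lagrange.interpolate_apply, lagrange_basis_intCast, coeff_C_mul]

namespace AbsoluteValue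

theorem apply_intCast_le_abs {R : Type*} [Ring R] (abv : AbsoluteValue R ℝ) (m : ℤ) :
    abv m ≤ |(m : ℝ)| := by
  rw [← abv.apply_natAbs_eq, ← Int.cast_abs, ← Nat.cast_natAbs]
  exact abv.apply_nat_le_self _

theorem coeff_prod_X_sub_C_le {R ι : Type*} [CommRing R] [Nontrivial R] (abv : AbsoluteValue R ℝ)
    (t : Finset ι) (a : ι → R) {M : ℝ} (ha : ∀ i ∈ t, abv (a i) ≤ M) (k : ℕ) :
    abv ((∏ i ∈ t, (X - C (a i))).coeff k) ≤ (1 + M) ^ t.card := by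
  classical
  induction t using Finset.cons_induction generalizing k with
  | empty => by_cases hk : k = 0 <;> simp [coeff_one, hk]
  | cons j t hj ih =>
    set Q := ∏ i ∈ t, (X - C (a i))
    have hQ : ∀ k, abv (Q.coeff k) ≤ (1 + M) ^ t.card := ih fun i hi => ha i (mem_cons_of_mem hi)
    have haj : abv (a j) ≤ M := ha j (mem_cons_self j t)
    have hM : 0 ≤ M := (abv.nonneg _).trans haj
    have hXQ : abv ((X * Q).coeff k) ≤ (1 + M) ^ t.card := by
      cases k with
      | zero => simpa using pow_nonneg (by linarith) _
      | succ k => simpa [coeff_X_mul] using hQ k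
    rw [prod_cons, sub_mul, coeff_sub, coeff_C_mul, card_cons, pow_succ]
    calc abv ((X * Q).coeff k - a j * Q.coeff k)
        ≤ abv ((X * Q).coeff k) + abv (a j) * abv (Q.coeff k) := by
          simpa using abv.sub_le_add ((X * Q).coeff k) (a j * Q.coeff k)
      _ ≤ (1 + M) ^ t.card + M * (1 + M) ^ t.card := by
          exact add_le_add hXQ (mul_le_mul haj (hQ k) (abv.nonneg _) hM)
      _ = (1 + M) ^ t.card * (1 + M) := by ring

theorem natCast_le_one_or_one_le_intCast {L : Type*} [Field L] [CharZero L]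
    (f : AbsoluteValue L ℝ) : (∀ n : ℕ, f n ≤ 1) ∨ ∀ m : ℤ, m ≠ 0 → 1 ≤ f m := by
  refine or_iff_not_imp_left.mpr fun hunb m hm => ?_
  set g : AbsoluteValue ℚ ℝ := f.comp (Rat.castHom L).injective
  have hg : ∀ n : ℕ, g n = f n := fun n => by simp [g, AbsoluteValue.comp, MulHom.comp]
  rw [← f.apply_natAbs_eq, ← hg]
  obtain h1 | h1 : m.natAbs = 1 ∨ 1 < m.natAbs := by have := Int.natAbs_pos.mpr hm; omega
  · simp [h1]
  · exact (Rat.AbsoluteValue.one_lt_of_not_bounded (by simpa [hg] using hunb) h1).le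

theorem intCast_inv_le_of_dvd {L : Type*} [Field L] [CharZero L] (f : AbsoluteValue L ℝ)
    {c F : ℤ} (hF : F ≠ 0) (hcF : c ∣ F) : f (c : L)⁻¹ ≤ max 1 (f (F : L)⁻¹) := by
  rcases f.natCast_le_one_or_one_le_intCast with hle | hge
  · obtain ⟨m, rfl⟩ := hcF
    have hc : (c : L) ≠ 0 := by exact_mod_cast left_ne_zero_of_mul hF
    have hm0 : (m : L) ≠ 0 := by exact_mod_cast right_ne_zero_of_mul hF
    have hm : f m ≤ 1 := by rw [← f.apply_natAbs_eq]; exact hle _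
    calc f (c : L)⁻¹ = f m * f ((c * m : ℤ) : L)⁻¹ := by
          rw [← map_mul]; push_cast; field_simp
      _ ≤ 1 * f ((c * m : ℤ) : L)⁻¹ := by gcongr
      _ ≤ max 1 (f ((c * m : ℤ) : L)⁻¹) := by rw [one_mul]; exact le_max_right _ _
  · rw [map_inv₀]
    exact (inv_le_one_of_one_le₀ (hge c (ne_zero_of_dvd_ne_zero hF hcF))).trans (le_max_left _ _)

end AbsoluteValue

section LocalBounds

variable {L : Type*} [Field L] (f : AbsoluteValue L ℝ) {P : L[X]} {d : ℕ}
  {s : Finset ℤ} {A B : ℤ} {E : ℝ}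

theorem abv_lagrange_term_le [CharZero L] (hsAB : s ⊆ Icc A B)
    (hE : ∀ z ∈ s, f (P.eval (z : L)) ≤ E) {z : ℤ} (hz : z ∈ s) {k : ℕ} {K : ℝ}
    (hK : f ((lagrangeNum s z).coeff k : L) ≤ K) :
    f (P.eval (z : L) * ((lagrangeDen s z : L)⁻¹ * ((lagrangeNum s z).coeff k : L))) ≤
      E * max 1 (f ((B - A).toNat ! : L)⁻¹) * K := by
  have hden := f.intCast_inv_le_of_dvd (Nat.cast_ne_zero.mpr (B - A).toNat.factorial_ne_zero)
    (lagrangeDen_dvd_factorial hsAB hz)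
  rw [Int.cast_natCast] at hden
  have hE0 : 0 ≤ E := (f.nonneg _).trans (hE z hz)
  rw [map_mul, map_mul, ← mul_assoc]
  exact mul_le_mul (mul_le_mul (hE z hz) hden (f.nonneg _) hE0) hK (f.nonneg _)
    (mul_nonneg hE0 (zero_le_one.trans (le_max_left _ _)))

theorem abv_coeff_le_of_lagrange [CharZero L] (hs : s.card = d + 1) (hsAB : s ⊆ Icc A B)
    (hdeg : P.natDegree ≤ d) (hE : ∀ z ∈ s, f (P.eval (z : L)) ≤ E) (k : ℕ) :
    f (P.coeff k) ≤
      (d + 1) * (1 + (max |A| |B| : ℤ)) ^ d * (E * max 1 (f ((B - A).toNat ! : L)⁻¹)) := by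
  set M : ℝ := ((max |A| |B| : ℤ) : ℝ)
  have hM : ∀ z ∈ s, |(z : ℝ)| ≤ M := fun z hz => by
    have := mem_Icc.mp (hsAB hz)
    rw [← Int.cast_abs]
    exact Int.cast_le.mpr (abs_le_max_abs_abs this.1 this.2)
  have hnum : ∀ z ∈ s, f ((lagrangeNum s z).coeff k : L) ≤ (1 + M) ^ d := fun z hz => by
    have := f.coeff_prod_X_sub_C_le (s.erase z) (Int.cast : ℤ → L)
      (fun w hw => (f.apply_intCast_le_abs w).trans (hM w (mem_of_mem_erase hw))) k
    rwa [card_erase_of_mem hz, hs, Nat.add_sub_cancel, ← map_lagrangeNum, coeff_map,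
      eq_intCast] at this
  rw [coeff_eq_sum_lagrange (by rw [hs]; omega)]
  calc f (∑ z ∈ s, _) ≤ ∑ z ∈ s, f (P.eval (z : L) * ((lagrangeDen s z : L)⁻¹ *
        ((lagrangeNum s z).coeff k : L))) := f.sum_le _ _
    _ ≤ ∑ z ∈ s, E * max 1 (f ((B - A).toNat ! : L)⁻¹) * (1 + M) ^ d := sum_le_sum fun z hz =>
        abv_lagrange_term_le f hsAB hE hz (hnum z hz)
    _ = (d + 1) * (1 + M) ^ d * (E * max 1 (f ((B - A).toNat ! : L)⁻¹)) := by
        rw [sum_const, hs, nsmul_eq_mul]; push_cast; ring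

theorem abv_coeff_le_of_lagrange_of_isNonarchimedean [CharZero L] (hna : IsNonarchimedean f)
    (hs : s.card = d + 1) (hsAB : s ⊆ Icc A B) (hdeg : P.natDegree ≤ d)
    (hE : ∀ z ∈ s, f (P.eval (z : L)) ≤ E) (k : ℕ) :
    f (P.coeff k) ≤ E * max 1 (f ((B - A).toNat ! : L)⁻¹) := by
  rw [coeff_eq_sum_lagrange (by rw [hs]; omega)]
  obtain ⟨z, hz, hle⟩ := hna.finset_image_add_of_nonempty _ (card_pos.mp (by rw [hs]; omega))
  simpa using hle.trans (abv_lagrange_term_le f hsAB hE hz hna.apply_intCast_le_one)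

theorem log_max_one_iSup_coeff_le {ι : Type*} [Fintype ι] {y : ι → ℤ}
    (hinj : Function.Injective y) (hy : ∀ i, y i ∈ Set.Icc A B) (hd : d + 1 ≤ Fintype.card ι)
    {C : ℝ} (hC : 1 ≤ C)
    (hcoeff : ∀ s : Finset ℤ, s.card = d + 1 → s ⊆ Icc A B → ∀ E,
      (∀ z ∈ s, f (P.eval (z : L)) ≤ E) → ∀ k,
        f (P.coeff k) ≤ C * (E * max 1 (f ((B - A).toNat ! : L)⁻¹))) :
    log (max 1 (⨆ k, f (P.coeff k))) ≤ log C +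
      ((Fintype.card ι : ℝ) - d)⁻¹ * ∑ i, log (max 1 (f (P.eval (y i : L)))) +
        log (max 1 (f ((B - A).toNat ! : L)⁻¹)) := by
  classical
  refine log_max_one_iSup_le_of_forall_subset hd hC (le_max_left _ _) fun S hS E hE => ?_
  refine hcoeff (S.image y) (by rw [card_image_of_injective _ hinj, hS])
    (fun z hz => ?_) E (fun z hz => ?_)
  · obtain ⟨i, -, rfl⟩ := mem_image.mp hz
    exact mem_Icc.mpr (hy i)
  · obtain ⟨i, hi, rfl⟩ := mem_image.mp hz
    exact hE i hi

theorem log_max_one_iSup_coeff_le_indicator [CharZero L] {V ι : Type*} [Fintype ι]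
    (absv : V → AbsoluteValue L ℝ) {arch : Set V} (hna : ∀ v ∉ arch, IsNonarchimedean ⇑(absv v))
    {y : ι → ℤ} (hinj : Function.Injective y) (hy : ∀ i, y i ∈ Set.Icc A B)
    (hd : d + 1 ≤ Fintype.card ι) (hdeg : P.natDegree ≤ d) (v : V) :
    log (max 1 (⨆ k, absv v (P.coeff k))) ≤
      arch.indicator (fun _ => log ((d + 1) * (1 + (max |A| |B| : ℤ)) ^ d)) v +
        ((Fintype.card ι : ℝ) - d)⁻¹ * ∑ i, log (max 1 (absv v (P.eval (y i : L)))) +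
          log (max 1 (absv v ((B - A).toNat ! : L)⁻¹)) := by
  by_cases hv : v ∈ arch
  · have hC : (1 : ℝ) ≤ (d + 1) * (1 + (max |A| |B| : ℤ)) ^ d := one_le_mul_of_one_le_of_one_le
      (by simp) (one_le_pow₀ (le_add_of_nonneg_right (by positivity)))
    simpa [hv] using log_max_one_iSup_coeff_le (absv v) hinj hy hd hC
      fun s hs hsAB E hE k => abv_coeff_le_of_lagrange (absv v) hs hsAB hdeg hE k
  · simpa [hv] using log_max_one_iSup_coeff_le (absv v) hinj hy hd le_rfl
      fun s hs hsAB E hE k => by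
        simpa using
          abv_coeff_le_of_lagrange_of_isNonarchimedean (absv v) (hna v hv) hs hsAB hdeg hE k

end LocalBounds

section Heights

variable {L V : Type*} [Field L] (absv : V → AbsoluteValue L ℝ) (wt : V → ℝ)

theorem finite_setOf_one_lt_abv (hfin : ∀ x : L, x ≠ 0 → {v | absv v x ≠ 1}.Finite) (x : L) :
    {v | 1 < absv v x}.Finite := by
  rcases eq_or_ne x 0 with rfl | hx
  · exact Set.finite_empty.subset fun v hv => by norm_num at hv
  · exact (hfin x hx).subset fun v hv => hv.ne'

theorem heightElem_eq_sum {T : Finset V} {x : L} (hT : ∀ v, 1 < absv v x → v ∈ T) :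
    heightElem absv wt x = ∑ v ∈ T, wt v * log (max 1 (absv v x)) :=
  finsum_eq_sum_of_support_subset _ fun v hv => hT v <| by
    by_contra! h
    simp [max_eq_left h] at hv

theorem heightPoly_eq_sum {T : Finset V} {P : L[X]}
    (hT : ∀ v k, 1 < absv v (P.coeff k) → v ∈ T) :
    heightPoly absv wt P = ∑ v ∈ T, wt v * log (max 1 (⨆ k, absv v (P.coeff k))) :=
  finsum_eq_sum_of_support_subset _ fun v hv => by
    by_contra hvT
    have h : ⨆ k, absv v (P.coeff k) ≤ 1 := ciSup_le fun k => not_lt.mp fun h => hvT (hT v k h)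
    simp [max_eq_left h] at hv

theorem heightElem_inv (hprod : ∀ x : L, x ≠ 0 → ∑ᶠ v, wt v * log (absv v x) = 0)
    (hfin : ∀ x : L, x ≠ 0 → {v | absv v x ≠ 1}.Finite) (x : L) :
    heightElem absv wt x⁻¹ = heightElem absv wt x := by
  rcases eq_or_ne x 0 with rfl | hx
  · simp
  set T := (hfin x hx).toFinset
  have hT : ∀ v, absv v x ≠ 1 → v ∈ T := fun v hv => (hfin x hx).mem_toFinset.mpr hv
  have hlog : ∑ v ∈ T, wt v * log (absv v x) = 0 := by
    rw [← hprod x hx]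
    refine (finsum_eq_sum_of_support_subset _ fun v hv => hT v fun h => ?_).symm
    simp [h] at hv
  rw [heightElem_eq_sum absv wt (T := T) fun v h => hT v fun h1 => by
      rw [map_inv₀, h1, inv_one] at h; exact lt_irrefl _ h,
    heightElem_eq_sum absv wt (T := T) fun v h => hT v h.ne',
    ← sub_zero (∑ v ∈ T, wt v * log (max 1 (absv v x))), ← hlog,
    ← sum_sub_distrib]
  refine sum_congr rfl fun v _ => ?_
  have hpos := (absv v).pos hx
  rw [← mul_sub, map_inv₀, ← posLog_eq_log_max_one (inv_nonneg.mpr hpos.le),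
    ← posLog_eq_log_max_one hpos.le, ← posLog_sub_posLog_inv (x := absv v x)]
  ring

theorem sum_mul_indicator_eq {arch : Set V} (hsum : ∑ᶠ v ∈ arch, wt v = 1) {T : Finset V}
    (hT : ∀ v ∈ arch, v ∈ T) (c : ℝ) :
    ∑ v ∈ T, wt v * arch.indicator (fun _ => c) v = c := by
  classical
  simp_rw [Set.indicator_apply, mul_ite, mul_zero]
  rw [← sum_filter, ← sum_mul, ← finsum_mem_eq_sum_of_subset wt (t := T.filter (· ∈ arch))
    (fun v hv => mem_filter.mpr ⟨hT v hv.1, hv.1⟩) (fun v hv => (mem_filter.mp hv).2), hsum,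
    one_mul]

theorem heightElem_natCast_le {arch : Set V} (harch : arch.Finite) (hwt : ∀ v, 0 ≤ wt v)
    (hsum : ∑ᶠ v ∈ arch, wt v = 1) (hfin : ∀ x : L, x ≠ 0 → {v | absv v x ≠ 1}.Finite)
    (hna : ∀ v ∉ arch, IsNonarchimedean ⇑(absv v)) (n : ℕ) :
    heightElem absv wt (n : L) ≤ log n := by
  set T := (harch.union (finite_setOf_one_lt_abv absv hfin n)).toFinset
  rw [heightElem_eq_sum absv wt (T := T) fun v hv => by simp [T, hv]]
  calc ∑ v ∈ T, wt v * log (max 1 (absv v n)) ≤ ∑ v ∈ T, wt v * arch.indicator (fun _ => log n) v :=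
        sum_le_sum fun v _ => mul_le_mul_of_nonneg_left ?_ (hwt v)
    _ = log n := sum_mul_indicator_eq wt hsum (fun v hv => by simp [T, hv]) _
  by_cases hv : v ∈ arch
  · rw [Set.indicator_of_mem hv]
    rcases n.eq_zero_or_pos with rfl | hn
    · simp
    · exact log_le_log (by positivity)
        (max_le (by exact_mod_cast hn) ((absv v).apply_nat_le_self n))
  · simp [Set.indicator_of_notMem hv, (hna v hv).apply_natCast_le_one]

theorem heightPoly_le_of_forall_log_le {arch : Set V} (harch : arch.Finite)
    (hwt : ∀ v, 0 ≤ wt v) (hsum : ∑ᶠ v ∈ arch, wt v = 1)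
    (hfin : ∀ x : L, x ≠ 0 → {v | absv v x ≠ 1}.Finite) {ι : Type*} [Fintype ι] (P : L[X])
    (x : ι → L) (G : L) (C c : ℝ) (hloc : ∀ v, log (max 1 (⨆ k, absv v (P.coeff k))) ≤
      arch.indicator (fun _ => log C) v + c * ∑ i, log (max 1 (absv v (x i))) +
        log (max 1 (absv v G))) :
    heightPoly absv wt P ≤ log C + c * ∑ i, heightElem absv wt (x i) + heightElem absv wt G := by
  classical
  have hfin' := finite_setOf_one_lt_abv absv hfin
  set T := harch.toFinset ∪ (hfin' G).toFinset ∪ univ.biUnion (fun i => (hfin' (x i)).toFinset) ∪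
    P.support.biUnion (fun k => (hfin' (P.coeff k)).toFinset)
  have hTarch : ∀ v ∈ arch, v ∈ T := fun v hv => by simp [T, hv]
  have hTG : ∀ v, 1 < absv v G → v ∈ T := fun v hv => by simp [T, hv]
  have hTx : ∀ i v, 1 < absv v (x i) → v ∈ T := fun i v hv => by
    simp only [T, mem_union, mem_biUnion, Set.Finite.mem_toFinset]
    exact .inl (.inr ⟨i, mem_univ _, hv⟩)
  have hTP : ∀ v k, 1 < absv v (P.coeff k) → v ∈ T := fun v k hv => by
    refine mem_union_right _
      (mem_biUnion.mpr ⟨k, mem_support_iff.mpr fun h => ?_, by simpa using hv⟩)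
    rw [h, map_zero] at hv
    exact absurd hv zero_lt_one.not_gt
  rw [heightPoly_eq_sum absv wt hTP, heightElem_eq_sum absv wt hTG]
  simp_rw [heightElem_eq_sum absv wt (hTx _)]
  calc _ ≤ ∑ v ∈ T, wt v * (arch.indicator (fun _ => log C) v +
        c * ∑ i, log (max 1 (absv v (x i))) + log (max 1 (absv v G))) :=
        sum_le_sum fun v _ => mul_le_mul_of_nonneg_left (hloc v) (hwt v)
    _ = _ := by
      simp_rw [mul_add, sum_add_distrib, sum_mul_indicator_eq wt hsum hTarch, mul_sum,
        mul_left_comm _ c]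
      rw [sum_comm]

end Heights

theorem height_poly_le_of_integer_evaluations_general
    {L V : Type*} [Field L] [CharZero L]
    (absv : V → AbsoluteValue L ℝ) (wt : V → ℝ) (arch : Set V)
    (harch : arch.Finite) (hwt : ∀ v, 0 ≤ wt v)
    (hna : ∀ v ∉ arch, IsNonarchimedean ⇑(absv v))
    (hsum : ∑ᶠ v ∈ arch, wt v = 1)
    (hprod : ∀ x : L, x ≠ 0 → ∑ᶠ v, wt v * Real.log (absv v x) = 0)
    (hfin : ∀ x : L, x ≠ 0 → {v | absv v x ≠ 1}.Finite)
    (A B : ℤ) (D M : ℤ) (hD : D = B - A) (hM : M = max |A| |B|)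
    (d : ℕ) (P : Polynomial L) (hdeg : P.natDegree ≤ d)
    (N : ℕ) (hN : d + 1 ≤ N)
    (y : Fin N → ℤ) (hinj : Function.Injective y)
    (hyAB : ∀ i, y i ∈ Set.Icc A B)
    (H : ℝ) (hH : ∀ i, heightElem absv wt (P.eval ((y i : ℤ) : L)) ≤ H) :
    heightPoly absv wt P ≤
      ((N : ℝ) / ((N : ℝ) - (d : ℝ))) * H + (D : ℝ) * Real.log (D : ℝ)
        + (d : ℝ) * Real.log (2 * (M : ℝ)) + Real.log ((d : ℝ) + 1) := by
  subst hD hM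
  have hAB : A ≤ B := (hyAB ⟨0, by omega⟩).1.trans (hyAB ⟨0, by omega⟩).2
  have hloc := log_max_one_iSup_coeff_le_indicator absv hna hinj hyAB (by simpa using hN) hdeg
  simp only [Fintype.card_fin] at hloc
  have hP := heightPoly_le_of_forall_log_le absv wt harch hwt hsum hfin P _ _ _ _ hloc
  rw [heightElem_inv absv wt hprod hfin] at hP
  have hfact := (heightElem_natCast_le absv wt harch hwt hsum hfin hna _).trans
    (log_factorial_le_mul_log (B - A).toNat)
  rw [show ((B - A).toNat : ℝ) = ((B - A : ℤ) : ℝ) by exact_mod_cast Int.toNat_of_nonneg (by omega)]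
    at hfact
  have hC₀ := log_mul_one_add_pow_le (d := d) (M := ((max |A| |B| : ℤ) : ℝ)) (by positivity)
    fun hd => by exact_mod_cast
      one_le_max_abs_abs (hyAB ⟨0, by omega⟩) (hyAB ⟨1, by omega⟩) (hinj.ne (by simp))
  have hH' : ∑ i, heightElem absv wt (P.eval (y i : L)) ≤ N * H := by
    simpa using sum_le_sum fun i (_ : i ∈ univ) => hH i
  have hNd : (0 : ℝ) < N - d := by
    have : (d : ℝ) + 1 ≤ N := by exact_mod_cast hN
    linarith
  have := mul_le_mul_of_nonneg_left hH' (inv_nonneg.mpr hNd.le)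
  rw [show (N : ℝ) / (N - d) * H = ((N : ℝ) - d)⁻¹ * (N * H) by ring]
  linarith

/-- Height bound for a univariate polynomial of degree at most `d` over a
number field from the heights of its values at `N ≥ d+1` distinct integers
`y_1, …, y_N` in an interval `[A,B]`: with `D = B − A`, `M = max{|A|,|B|}`,
and `h(P(y_i)) ≤ H` for all `i`, one has
`h(P) ≤ (N/(N−d))·H + D·log D + d·log(2M) + log(d+1)`. -/
theorem height_poly_le_of_integer_evaluations
    {L V : Type*} [Field L] [CharZero L]
    (absv : V → AbsoluteValue L ℝ) (wt : V → ℝ) (arch : Set V)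
    (harch : arch.Finite) (hwt : ∀ v, 0 ≤ wt v)
    (hna : ∀ v ∉ arch, IsNonarchimedean ⇑(absv v))
    (hsum : ∑ᶠ v ∈ arch, wt v = 1)
    (hprod : ∀ x : L, x ≠ 0 → ∑ᶠ v, wt v * Real.log (absv v x) = 0)
    (hfin : ∀ x : L, x ≠ 0 → {v | absv v x ≠ 1}.Finite)
    (A B : ℤ) (D M : ℤ) (hD : D = B - A) (hM : M = max |A| |B|)
    (d : ℕ) (hd : 1 ≤ d) (P : Polynomial L) (hdeg : P.natDegree ≤ d)
    (N : ℕ) (hN : d + 1 ≤ N)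
    (y : Fin N → ℤ) (hinj : Function.Injective y)
    (hyAB : ∀ i, y i ∈ Set.Icc A B)
    (H : ℝ) (hH : ∀ i, heightElem absv wt (P.eval ((y i : ℤ) : L)) ≤ H) :
    heightPoly absv wt P ≤
      ((N : ℝ) / ((N : ℝ) - (d : ℝ))) * H + (D : ℝ) * Real.log (D : ℝ)
        + (d : ℝ) * Real.log (2 * (M : ℝ)) + Real.log ((d : ℝ) + 1) :=
  height_poly_le_of_integer_evaluations_general absv wt arch harch hwt hna hsum hprod hfin A B D M
    hD hM d P hdeg N hN y hinj hyAB H hH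
end

section
/- Let j_1 = I_4·I_6'/I_10, j_2 = I_4²·I_12/I_10², j_3 = I_4⁵/I_10² be the Igusa invariants, where I_4, I_6', I_10, I_12 are Siegel modular forms of weights 4, 6, 10, 12 generating the graded ℚ-algebra of Siegel modular forms of genus 2 and level Sp_4(ℤ). If f/g is any quotient of two such modular forms of equal weight w (with g nonzero), then f/g can be written as a rational fraction in j_1, j_2, j_3 of total degree at most w/6. -/
noncomputable section

open MvPolynomial

/- The graded `ℚ`-algebra of Siegel modular forms of genus 2 and level
`Sp₄(ℤ)` is the free polynomial algebra `ℚ[I₄, I₆', I₁₀, I₁₂]` on generators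
of weights `4, 6, 10, 12` (Igusa). We realize it as `MvPolynomial (Fin 4) ℚ`
with `X 0 = I₄`, `X 1 = I₆'`, `X 2 = I₁₀`, `X 3 = I₁₂`, graded by the weight
function `![4, 6, 10, 12]`, and work in its fraction field. -/

/-- The field of fractions of the ring of Siegel modular forms. -/
abbrev SiegelFF : Type := FractionRing (MvPolynomial (Fin 4) ℚ)

/-- The canonical map from modular forms to the fraction field. -/
def toFF : MvPolynomial (Fin 4) ℚ →+* SiegelFF :=
  algebraMap (MvPolynomial (Fin 4) ℚ) SiegelFF

/-- The first Igusa invariant `j₁ = I₄·I₆'/I₁₀`. -/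
def j1 : SiegelFF := toFF (X 0 * X 1) / toFF (X 2)

/-- The second Igusa invariant `j₂ = I₄²·I₁₂/I₁₀²`. -/
def j2 : SiegelFF := toFF (X 0 ^ 2 * X 3) / toFF (X 2 ^ 2)

/-- The third Igusa invariant `j₃ = I₄⁵/I₁₀²`. -/
def j3 : SiegelFF := toFF (X 0 ^ 5) / toFF (X 2 ^ 2)

/-- Evaluation of a rational expression `P ∈ ℚ[Y₁, Y₂, Y₃]` at the Igusa
invariants `(j₁, j₂, j₃)`. -/
def evalIgusa (P : MvPolynomial (Fin 3) ℚ) : SiegelFF :=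
  eval₂ (toFF.comp (C : ℚ →+* MvPolynomial (Fin 4) ℚ)) ![j1, j2, j3] P

/-!
A monomial `I₄ᵃ I₆'ᵇ I₁₀ᶜ I₁₂ᵈ` of weight `w = 2v` equals
`j₁ᵇ j₂ᵈ j₃ᵉ · I₁₀ᵛ / I₄ʷ` with `e = a + b + 2c + 2d`. Hence `f · I₄ʷ` and `g · I₄ʷ`
are both polynomials in the `jᵢ` times the same factor `I₁₀ᵛ`, and their ratio is `f/g`.
Since `6e ≥ w`, every exponent `e` is at least `k = ⌈w/6⌉`, so the common factor `j₃ᵏ`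
can be pulled out as well; this brings the degree `b + d + (e - k)` of each term
down to at most `w/6`.
-/

lemma toFF_ne_zero {p : MvPolynomial (Fin 4) ℚ} (hp : p ≠ 0) : toFF p ≠ 0 :=
  (map_ne_zero_iff _ (IsFractionRing.injective _ _)).mpr hp

lemma weight_siegel_apply (m : Fin 4 →₀ ℕ) :
    Finsupp.weight ![4, 6, 10, 12] m = 4 * m 0 + 6 * m 1 + 10 * m 2 + 12 * m 3 := by
  rw [Finsupp.weight_apply, Finsupp.sum_fintype _ _ (by simp), Fin.sum_univ_four]
  simp only [smul_eq_mul, Matrix.cons_val_zero, Matrix.cons_val_one, Matrix.head_cons,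
    Matrix.cons_val_two, Matrix.cons_val_three, Matrix.tail_cons]
  ring

lemma even_of_isWeightedHomogeneous {w : ℕ} {g : MvPolynomial (Fin 4) ℚ}
    (hg : IsWeightedHomogeneous ![4, 6, 10, 12] g w) (hg0 : g ≠ 0) : Even w := by
  obtain ⟨m, hm⟩ := Finset.nonempty_iff_ne_empty.mpr (support_eq_empty.not.mpr hg0)
  have hwm := hg (mem_support_iff.mp hm)
  rw [weight_siegel_apply] at hwm
  exact ⟨2 * m 0 + 3 * m 1 + 5 * m 2 + 6 * m 3, by omega⟩

def j3Exponent (m : Fin 4 →₀ ℕ) : ℕ := m 0 + m 1 + 2 * m 2 + 2 * m 3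

lemma toFF_monomial_mul_X_zero_pow (m : Fin 4 →₀ ℕ) (q : ℚ) {v : ℕ}
    (hm : Finsupp.weight ![4, 6, 10, 12] m = 2 * v) :
    toFF (monomial m q) * toFF (X 0) ^ (2 * v)
      = toFF (C q) * (j1 ^ m 1 * j2 ^ m 3 * j3 ^ j3Exponent m) * toFF (X 2) ^ v := by
  rw [weight_siegel_apply] at hm
  obtain rfl : v = 2 * m 0 + 3 * m 1 + 5 * m 2 + 6 * m 3 := by omega
  have hX2 : toFF (X 2) ≠ 0 := toFF_ne_zero (X_ne_zero 2)
  rw [monomial_eq, Finsupp.prod_fintype _ _ (fun _ => pow_zero _), Fin.prod_univ_four,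
    j1, j2, j3, j3Exponent]
  simp only [map_mul, map_pow, div_pow]
  field_simp
  ring

/-- Meant for `k ≤ j3Exponent m`; otherwise the subtraction truncates. -/
def igusaTerm (k : ℕ) (m : Fin 4 →₀ ℕ) : MvPolynomial (Fin 3) ℚ :=
  X 0 ^ m 1 * X 1 ^ m 3 * X 2 ^ (j3Exponent m - k)

def igusaNumerator (k : ℕ) (h : MvPolynomial (Fin 4) ℚ) : MvPolynomial (Fin 3) ℚ :=
  ∑ m ∈ h.support, C (coeff m h) * igusaTerm k m

lemma evalIgusa_C_mul_igusaTerm_mul (q : ℚ) {k : ℕ} {m : Fin 4 →₀ ℕ} (hk : k ≤ j3Exponent m) :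
    evalIgusa (C q * igusaTerm k m) * j3 ^ k
      = toFF (C q) * (j1 ^ m 1 * j2 ^ m 3 * j3 ^ j3Exponent m) := by
  simp only [evalIgusa, igusaTerm, eval₂_mul, eval₂_pow, eval₂_C, eval₂_X, RingHom.comp_apply,
    Matrix.cons_val_zero, Matrix.cons_val_one, Matrix.head_cons, Matrix.cons_val_two,
    Matrix.tail_cons]
  rw [← pow_sub_mul_pow j3 hk]
  ring

lemma totalDegree_igusaTerm_le (k : ℕ) (m : Fin 4 →₀ ℕ) :
    (igusaTerm k m).totalDegree ≤ m 1 + m 3 + (j3Exponent m - k) := by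
  refine (totalDegree_mul _ _).trans (add_le_add ((totalDegree_mul _ _).trans ?_) ?_) <;>
    simp only [totalDegree_X_pow, le_refl]

section

variable {w k : ℕ} {h : MvPolynomial (Fin 4) ℚ}

lemma toFF_mul_X_zero_pow_eq (hh : IsWeightedHomogeneous ![4, 6, 10, 12] h w)
    (hk : 6 * k ≤ w + 5) {v : ℕ} (hv : w = 2 * v) :
    toFF h * toFF (X 0) ^ w = evalIgusa (igusaNumerator k h) * (j3 ^ k * toFF (X 2) ^ v) := by
  conv_lhs => rw [← support_sum_monomial_coeff h]
  rw [igusaNumerator, evalIgusa, map_sum, ← coe_eval₂Hom, map_sum, Finset.sum_mul,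
    Finset.sum_mul]
  refine Finset.sum_congr rfl fun m hm => ?_
  have hwm := hh (mem_support_iff.mp hm)
  have hkm : k ≤ j3Exponent m := by
    rw [weight_siegel_apply] at hwm
    rw [j3Exponent]
    omega
  rw [hv, toFF_monomial_mul_X_zero_pow m _ (hwm.trans hv), coe_eval₂Hom, ← evalIgusa,
    ← mul_assoc (evalIgusa _), evalIgusa_C_mul_igusaTerm_mul _ hkm]

lemma totalDegree_igusaNumerator_le (hh : IsWeightedHomogeneous ![4, 6, 10, 12] h w)
    (hk : w ≤ 6 * k) : ((igusaNumerator k h).totalDegree : ℝ) ≤ (w : ℝ) / 6 := by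
  suffices 6 * (igusaNumerator k h).totalDegree ≤ w by
    rw [le_div_iff₀ (by norm_num)]
    exact_mod_cast (mul_comm _ _).trans_le this
  have hterm : ∀ m ∈ h.support, (C (coeff m h) * igusaTerm k m).totalDegree ≤ w / 6 := by
    intro m hm
    have hwm := hh (mem_support_iff.mp hm)
    rw [weight_siegel_apply] at hwm
    have := totalDegree_igusaTerm_le k m
    rw [j3Exponent] at this
    refine (totalDegree_mul _ _).trans ?_
    rw [totalDegree_C]
    omega
  have := totalDegree_finsetSum_le hterm
  rw [← igusaNumerator] at this
  omega

end

lemma cross_mul_eq_of_mul_eq_mul {K : Type*} [CommRing K] [IsDomain K] {f g p q d e : K}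
    (hd : d ≠ 0) (hf : f * d = p * e) (hg : g * d = q * e) : f * q = g * p :=
  mul_right_cancel₀ hd (by linear_combination q * hf - p * hg)

/-- Any quotient `f/g` of two Siegel modular forms of genus 2, level
`Sp₄(ℤ)` and equal weight `w` (with `g ≠ 0`) can be written as a rational
fraction in the Igusa invariants `j₁, j₂, j₃` of total degree at most
`w/6`. -/
theorem siegel_modular_function_degree_le
    (w : ℕ) (f g : MvPolynomial (Fin 4) ℚ)
    (hf : IsWeightedHomogeneous ![4, 6, 10, 12] f w)
    (hg : IsWeightedHomogeneous ![4, 6, 10, 12] g w)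
    (hg0 : g ≠ 0) :
    ∃ P Q : MvPolynomial (Fin 3) ℚ,
      evalIgusa Q ≠ 0 ∧
      toFF f * evalIgusa Q = toFF g * evalIgusa P ∧
      (P.totalDegree : ℝ) ≤ (w : ℝ) / 6 ∧
      (Q.totalDegree : ℝ) ≤ (w : ℝ) / 6 := by
  obtain ⟨v, hv⟩ := even_of_isWeightedHomogeneous hg hg0
  set k := (w + 5) / 6
  have hk : 6 * k ≤ w + 5 ∧ w ≤ 6 * k := by omega
  have hfP := toFF_mul_X_zero_pow_eq hf hk.1 (hv.trans (two_mul v).symm)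
  have hgQ := toFF_mul_X_zero_pow_eq hg hk.1 (hv.trans (two_mul v).symm)
  have hX0 : toFF (X 0) ^ w ≠ 0 := pow_ne_zero _ (toFF_ne_zero (X_ne_zero 0))
  refine ⟨igusaNumerator k f, igusaNumerator k g, ?_,
    cross_mul_eq_of_mul_eq_mul hX0 hfP hgQ,
    totalDegree_igusaNumerator_le hf hk.2, totalDegree_igusaNumerator_le hg hk.2⟩
  intro hQ
  rw [hQ, zero_mul] at hgQ
  exact mul_ne_zero (toFF_ne_zero hg0) hX0 hgQ

end
end
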